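/- arXiv:quant-ph/0505048 — 6 statements merged into one kernel-verified Lean document; each statement's English description precedes it below -/
import Mathlib

section
/- Let Φ be a generalized depolarizing channel on d×d complex matrices, Φ(ρ) = Σ_k a_k V_k ρ V_k† + (1−a)(Tr ρ)(1/d)I, and suppose all the unitary matrices V_k have a common unit eigenvector ψ (i.e., for every k there is a scalar c_k with V_k ψ = c_k ψ). Then for every p ≥ 1, ‖Φ(|ψ⟩⟨ψ|)‖_p = ν_p(Φ) = ν_p(Γ_a), where Γ_a is the depolarizing channel with the same parameter a. -/
open scoped BigOperators Matrix Kronecker ComplexOrder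

noncomputable section

namespace GenDep

/-- A density matrix: positive semidefinite with trace 1. -/
def IsDensityMatrix {ι : Type*} [Fintype ι] (ρ : Matrix ι ι ℂ) : Prop :=
  ρ.PosSemidef ∧ ρ.trace = 1

/-- A unitary matrix. -/
def IsUnitary {ι : Type*} [Fintype ι] [DecidableEq ι] (V : Matrix ι ι ℂ) : Prop :=
  Vᴴ * V = 1 ∧ V * Vᴴ = 1

/-- The depolarizing channel with parameter `a` on `d × d` matrices. -/
def depolarizing (d : ℕ) (a : ℝ) (ρ : Matrix (Fin d) (Fin d) ℂ) :
    Matrix (Fin d) (Fin d) ℂ :=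
  (a : ℂ) • ρ + ((((1 : ℝ) - a : ℝ) : ℂ) / d * ρ.trace) • 1

/-- The Schatten `p`-norm, `(Tr ((AᴴA)^(p/2)))^(1/p)`, computed via the
eigenvalues of `AᴴA`. -/
def schattenNorm {ι : Type*} [Fintype ι] [DecidableEq ι] (p : ℝ) (A : Matrix ι ι ℂ) : ℝ :=
  (∑ i, ((Matrix.isHermitian_conjTranspose_mul_self A).eigenvalues i) ^ (p / 2)) ^ (1 / p)

/-- The maximal output `p`-norm of a map on matrices. -/
def maxOutputPNorm {ι : Type*} [Fintype ι] [DecidableEq ι] (p : ℝ)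
    (Φ : Matrix ι ι ℂ → Matrix ι ι ℂ) : ℝ :=
  sSup {x | ∃ ρ, IsDensityMatrix ρ ∧ x = schattenNorm p (Φ ρ)}

/-- The von Neumann entropy `-Tr (ρ log ρ)` (natural log, `0 log 0 = 0`),
computed via eigenvalues. -/
def vNEntropy {ι : Type*} [Fintype ι] [DecidableEq ι] (ρ : Matrix ι ι ℂ) : ℝ :=
  if h : ρ.IsHermitian then -∑ i, (h.eigenvalues i) * Real.log (h.eigenvalues i) else 0

/-- The minimal output entropy of a map on matrices. -/
def minOutputEntropy {ι : Type*} [Fintype ι] [DecidableEq ι]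
    (Φ : Matrix ι ι ℂ → Matrix ι ι ℂ) : ℝ :=
  sInf {x | ∃ ρ, IsDensityMatrix ρ ∧ x = vNEntropy (Φ ρ)}

/-- The tensor product `Φ ⊗ Ω` of two superoperators, acting on matrices over the
product index set (Kronecker product structure). -/
def tensorMap {ι κ : Type*} [Fintype ι] [DecidableEq ι] [Fintype κ]
    (Φ : Matrix ι ι ℂ → Matrix ι ι ℂ) (Ω : Matrix κ κ ℂ → Matrix κ κ ℂ)
    (ρ : Matrix (ι × κ) (ι × κ) ℂ) : Matrix (ι × κ) (ι × κ) ℂ :=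
  ∑ i : ι, ∑ k : ι,
    (Φ (Matrix.single i k 1)) ⊗ₖ (Ω (Matrix.of fun j l => ρ (i, j) (k, l)))

/-- Complete positivity of a map on `d × d` matrices: `id ⊗ Φ` preserves positive
semidefiniteness on every extended space. -/
def IsCompletelyPositive {d : ℕ}
    (Φ : Matrix (Fin d) (Fin d) ℂ → Matrix (Fin d) (Fin d) ℂ) : Prop :=
  ∀ n : ℕ, ∀ ρ : Matrix (Fin n × Fin d) (Fin n × Fin d) ℂ, ρ.PosSemidef →
    (tensorMap (id : Matrix (Fin n) (Fin n) ℂ → Matrix (Fin n) (Fin n) ℂ) Φ ρ).PosSemidef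

/-- A channel: a completely positive trace-preserving linear map. -/
structure IsChannel {d : ℕ}
    (Φ : Matrix (Fin d) (Fin d) ℂ → Matrix (Fin d) (Fin d) ℂ) : Prop where
  map_add : ∀ A B, Φ (A + B) = Φ A + Φ B
  map_smul : ∀ (c : ℂ) A, Φ (c • A) = c • Φ A
  trace_preserving : ∀ A, (Φ A).trace = A.trace
  cp : IsCompletelyPositive Φ

/-- The Holevo capacity of a map on matrices: the supremum over finite ensembles of
the Holevo quantity. -/
def holevoCapacity {d : ℕ}
    (Φ : Matrix (Fin d) (Fin d) ℂ → Matrix (Fin d) (Fin d) ℂ) : ℝ :=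
  sSup {x | ∃ (m : ℕ) (w : Fin m → ℝ) (ρ : Fin m → Matrix (Fin d) (Fin d) ℂ),
    (∀ j, 0 < w j) ∧ (∑ j, w j = 1) ∧ (∀ j, IsDensityMatrix (ρ j)) ∧
    x = vNEntropy (Φ (∑ j, (w j : ℂ) • ρ j)) - ∑ j, w j * vNEntropy (Φ (ρ j))}

/-- The matrix logarithm of a Hermitian matrix, via the spectral theorem, with the
convention `log 0 = 0` on the kernel (i.e. on the support for PSD matrices). -/
def matLog {ι : Type*} [Fintype ι] [DecidableEq ι] (A : Matrix ι ι ℂ) : Matrix ι ι ℂ :=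
  if h : A.IsHermitian then
    (Matrix.IsHermitian.eigenvectorUnitary h : Matrix ι ι ℂ) *
      Matrix.diagonal (fun i => (Real.log (h.eigenvalues i) : ℂ)) *
      (star (Matrix.IsHermitian.eigenvectorUnitary h : Matrix ι ι ℂ))
  else 0

/-- Real-valued quantum relative entropy `H(ρ, γ) = Tr ρ (log ρ - log γ)`. -/
def relEntropyR {ι : Type*} [Fintype ι] [DecidableEq ι] (ρ γ : Matrix ι ι ℂ) : ℝ :=
  (Matrix.trace (ρ * (matLog ρ - matLog γ))).re

open Classical in
/-- Extended-real-valued quantum relative entropy, `+∞` when the support condition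
`ker γ ⊆ ker ρ` fails. -/
def relEntropy {ι : Type*} [Fintype ι] [DecidableEq ι] (ρ γ : Matrix ι ι ℂ) : EReal :=
  if ∀ x : ι → ℂ, γ.mulVec x = 0 → ρ.mulVec x = 0 then ((relEntropyR ρ γ : ℝ) : EReal)
  else ⊤

end GenDep

/-!
Writing `σ ρ = ∑ₖ (aₖ / a) Vₖ ρ Vₖ†`, the channel factors as `Φ = Γₐ ∘ σ`, where the
mixed-unitary map `σ` sends density matrices to density matrices and fixes `|ψ⟩⟨ψ|`. Hence
`ν_p(Φ) ≤ ν_p(Γₐ)`, with equality as soon as a pure state maximises `‖Γₐ ρ‖_p`. The spectrum of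
`Γₐ ρ` is `a λᵢ + (1 - a) / d` for the spectrum `λ` of `ρ`, and by convexity of
`t ↦ (a t + c) ^ p`, the sum `∑ᵢ (a λᵢ + c) ^ p` over the probability simplex is largest at a
vertex, which is the spectrum of a pure state.
-/

open Matrix

namespace Matrix

variable {𝕜 n : Type*} [RCLike 𝕜] [Fintype n] [DecidableEq n]

theorem charpoly_conjStarAlgAut (U : unitaryGroup n 𝕜) (M : Matrix n n 𝕜) :
    (Unitary.conjStarAlgAut 𝕜 (Matrix n n 𝕜) U M).charpoly = M.charpoly := by
  rw [Unitary.conjStarAlgAut_apply, charpoly_mul_comm, ← Matrix.mul_assoc]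
  simp

namespace IsHermitian

theorem sum_comp_eigenvalues_of_eq_conj_diagonal {A : Matrix n n 𝕜} (hA : A.IsHermitian)
    (U : unitaryGroup n 𝕜) (w : n → ℝ)
    (hAw : A = Unitary.conjStarAlgAut 𝕜 (Matrix n n 𝕜) U (diagonal (RCLike.ofReal ∘ w : n → 𝕜)))
    (f : ℝ → ℝ) :
    ∑ i, f (hA.eigenvalues i) = ∑ i, f (w i) := by
  have hroots : Multiset.map (RCLike.ofReal ∘ hA.eigenvalues : n → 𝕜) Finset.univ.val =
      Multiset.map (RCLike.ofReal ∘ w : n → 𝕜) Finset.univ.val := by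
    rw [← hA.roots_charpoly_eq_eigenvalues, hAw, charpoly_conjStarAlgAut, charpoly_diagonal,
      Polynomial.roots_prod _ _ (by simp [Finset.prod_ne_zero_iff, Polynomial.X_sub_C_ne_zero])]
    simp
  have h := congrArg (fun s => (s.map (f ∘ RCLike.re)).sum) hroots
  simpa only [Multiset.map_map, Function.comp_def, RCLike.ofReal_re,
    ← Finset.sum_eq_multiset_sum] using h

theorem eigenvalues_eq_zero_or_one {A : Matrix n n 𝕜} (hA : A.IsHermitian)
    (hAA : IsIdempotentElem A) (i : n) : hA.eigenvalues i = 0 ∨ hA.eigenvalues i = 1 :=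
  hAA.spectrum_subset ℝ (hA.eigenvalues_mem_spectrum_real i)

end IsHermitian

theorem conj_vecMulVec_star_of_mulVec_eq_smul {V : Matrix n n 𝕜} (hV : Vᴴ * V = 1)
    {ψ : n → 𝕜} (hψ : star ψ ⬝ᵥ ψ = 1) {c : 𝕜} (hc : V *ᵥ ψ = c • ψ) :
    V * vecMulVec ψ (star ψ) * Vᴴ = vecMulVec ψ (star ψ) := by
  have hc1 : star c * c = 1 := by
    have h : star (V *ᵥ ψ) ⬝ᵥ (V *ᵥ ψ) = star ψ ⬝ᵥ ψ := by
      rw [star_mulVec, ← dotProduct_mulVec, mulVec_mulVec, hV, one_mulVec]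
    rwa [hc, star_smul, smul_dotProduct, dotProduct_smul, hψ, smul_eq_mul, smul_eq_mul,
      mul_one] at h
  rw [mul_vecMulVec, vecMulVec_mul, ← star_mulVec, hc, star_smul, vecMulVec_smul, smul_vecMulVec,
    smul_smul, hc1, one_smul]

end Matrix

section Convexity

theorem rpow_affine_le {p a c t : ℝ} (hp : 1 ≤ p) (ha : 0 ≤ a) (hc : 0 ≤ c) (ht0 : 0 ≤ t)
    (ht1 : t ≤ 1) : (a * t + c) ^ p ≤ (1 - t) * c ^ p + t * (a + c) ^ p := by
  have h := (convexOn_rpow hp).2 (Set.mem_Ici.mpr hc) (Set.mem_Ici.mpr (add_nonneg ha hc))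
    (sub_nonneg.mpr ht1) ht0 (sub_add_cancel 1 t)
  rwa [show a * t + c = (1 - t) * c + t * (a + c) by ring]

variable {ι : Type*} [Fintype ι]

theorem sum_affine_of_sum_eq_one (t : ι → ℝ) (ht : ∑ i, t i = 1) (x y : ℝ) :
    ∑ i, ((1 - t i) * x + t i * y) = y + (Fintype.card ι - 1) * x := by
  simp only [Finset.sum_add_distrib, ← Finset.sum_mul, Finset.sum_sub_distrib, ht,
    Finset.sum_const, Finset.card_univ, nsmul_eq_mul, mul_one]
  ring

theorem sum_rpow_affine_le {p a c : ℝ} (hp : 1 ≤ p) (ha : 0 ≤ a) (hc : 0 ≤ c) (t : ι → ℝ)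
    (ht0 : ∀ i, 0 ≤ t i) (ht : ∑ i, t i = 1) :
    ∑ i, (a * t i + c) ^ p ≤ (a + c) ^ p + (Fintype.card ι - 1) * c ^ p := by
  rw [← sum_affine_of_sum_eq_one t ht]
  refine Finset.sum_le_sum fun i _ => rpow_affine_le hp ha hc (ht0 i) ?_
  exact ht ▸ Finset.single_le_sum (fun j _ => ht0 j) (Finset.mem_univ i)

theorem sum_rpow_affine_of_eq_zero_or_one {p a c : ℝ} {t : ι → ℝ}
    (ht01 : ∀ i, t i = 0 ∨ t i = 1) (ht : ∑ i, t i = 1) :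
    ∑ i, (a * t i + c) ^ p = (a + c) ^ p + (Fintype.card ι - 1) * c ^ p := by
  rw [← sum_affine_of_sum_eq_one t ht]
  refine Finset.sum_congr rfl fun i _ => ?_
  rcases ht01 i with h | h <;> simp [h]

end Convexity

namespace GenDep

section DensityMatrix

variable {n : Type*} [Fintype n]

theorem isDensityMatrix_vecMulVec_star {ψ : n → ℂ} (hψ : star ψ ⬝ᵥ ψ = 1) :
    IsDensityMatrix (vecMulVec ψ (star ψ)) :=
  ⟨posSemidef_vecMulVec_self_star ψ, by rw [trace_vecMulVec, dotProduct_comm, hψ]⟩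

theorem isIdempotentElem_vecMulVec_star {ψ : n → ℂ} (hψ : star ψ ⬝ᵥ ψ = 1) :
    IsIdempotentElem (vecMulVec ψ (star ψ)) := by
  rw [IsIdempotentElem, vecMulVec_mul_vecMulVec, hψ, one_smul]

variable [DecidableEq n]

theorem IsDensityMatrix.sum_eigenvalues {ρ : Matrix n n ℂ} (hρ : IsDensityMatrix ρ) :
    ∑ i, hρ.1.1.eigenvalues i = 1 := by
  have h := hρ.1.1.trace_eq_sum_eigenvalues.symm.trans hρ.2
  simp only [RCLike.ofReal_eq_complex_ofReal] at h
  exact_mod_cast h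

theorem schattenNorm_conj_diagonal (p : ℝ) (U : unitaryGroup n ℂ) (w : n → ℝ) :
    schattenNorm p (Unitary.conjStarAlgAut ℂ (Matrix n n ℂ) U (diagonal (RCLike.ofReal ∘ w))) =
      (∑ i, |w i| ^ p) ^ (1 / p) := by
  set A := Unitary.conjStarAlgAut ℂ (Matrix n n ℂ) U (diagonal (RCLike.ofReal ∘ w))
  have hAA : Aᴴ * A = Unitary.conjStarAlgAut ℂ (Matrix n n ℂ) U
      (diagonal (RCLike.ofReal ∘ fun i => w i ^ 2)) := by
    rw [← star_eq_conjTranspose, ← map_star, ← map_mul, star_eq_conjTranspose,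
      diagonal_conjTranspose, diagonal_mul_diagonal]
    congr 2
    ext i
    simp [sq]
  rw [schattenNorm, (isHermitian_conjTranspose_mul_self A).sum_comp_eigenvalues_of_eq_conj_diagonal
    U _ hAA (· ^ (p / 2))]
  congr 1
  refine Finset.sum_congr rfl fun i _ => ?_
  rw [← sq_abs, ← Real.rpow_natCast, ← Real.rpow_mul (abs_nonneg _), Nat.cast_ofNat,
    mul_div_cancel₀ p two_ne_zero]

end DensityMatrix

variable {d : ℕ}

theorem depolarizing_eq_conj_diagonal (a : ℝ) {ρ : Matrix (Fin d) (Fin d) ℂ}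
    (hρ : IsDensityMatrix ρ) :
    depolarizing d a ρ = Unitary.conjStarAlgAut ℂ (Matrix (Fin d) (Fin d) ℂ)
      hρ.1.1.eigenvectorUnitary
      (diagonal (RCLike.ofReal ∘ fun i => a * hρ.1.1.eigenvalues i + (1 - a) / d)) := by
  have hdiag : diagonal (RCLike.ofReal ∘ fun i => a * hρ.1.1.eigenvalues i + (1 - a) / d) =
      (a : ℂ) • diagonal (RCLike.ofReal ∘ hρ.1.1.eigenvalues) +
        ((((1 : ℝ) - a : ℝ) : ℂ) / d) • (1 : Matrix (Fin d) (Fin d) ℂ) := by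
    ext i j
    by_cases h : i = j
    · subst h
      simp
    · simp [h]
  rw [hdiag, map_add, map_smul, map_smul, map_one, ← hρ.1.1.spectral_theorem, depolarizing,
    hρ.2, mul_one]

theorem schattenNorm_depolarizing (p : ℝ) {a : ℝ} (ha0 : 0 ≤ a) (ha1 : a ≤ 1)
    {ρ : Matrix (Fin d) (Fin d) ℂ} (hρ : IsDensityMatrix ρ) :
    schattenNorm p (depolarizing d a ρ) =
      (∑ i, (a * hρ.1.1.eigenvalues i + (1 - a) / d) ^ p) ^ (1 / p) := by
  rw [depolarizing_eq_conj_diagonal a hρ, schattenNorm_conj_diagonal]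
  congr 1
  refine Finset.sum_congr rfl fun i _ => ?_
  have := hρ.1.eigenvalues_nonneg i
  rw [abs_of_nonneg (by bound)]

theorem schattenNorm_depolarizing_le_of_isIdempotentElem {p a : ℝ} (hp : 1 ≤ p) (ha0 : 0 ≤ a)
    (ha1 : a ≤ 1) {ρ P : Matrix (Fin d) (Fin d) ℂ} (hρ : IsDensityMatrix ρ)
    (hP : IsDensityMatrix P) (hPP : IsIdempotentElem P) :
    schattenNorm p (depolarizing d a ρ) ≤ schattenNorm p (depolarizing d a P) := by
  have hc : 0 ≤ (1 - a) / d := div_nonneg (sub_nonneg.mpr ha1) d.cast_nonneg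
  rw [schattenNorm_depolarizing p ha0 ha1 hρ, schattenNorm_depolarizing p ha0 ha1 hP,
    sum_rpow_affine_of_eq_zero_or_one (hP.1.1.eigenvalues_eq_zero_or_one hPP)
      hP.sum_eigenvalues]
  gcongr
  · exact Finset.sum_nonneg fun i _ =>
      Real.rpow_nonneg (add_nonneg (mul_nonneg ha0 (hρ.1.eigenvalues_nonneg i)) hc) p
  · exact sum_rpow_affine_le hp ha0 hc _ hρ.1.eigenvalues_nonneg hρ.sum_eigenvalues

section MixedUnitary

variable {n κ : Type*} [Fintype n] [DecidableEq n] [Fintype κ]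

def mixedUnitary (w : κ → ℝ) (V : κ → Matrix n n ℂ) (ρ : Matrix n n ℂ) : Matrix n n ℂ :=
  ∑ k, (w k : ℂ) • (V k * ρ * (V k)ᴴ)

variable {w : κ → ℝ} {V : κ → Matrix n n ℂ}

theorem trace_mixedUnitary (hV : ∀ k, (V k)ᴴ * V k = 1) (hw : ∑ k, w k = 1)
    (ρ : Matrix n n ℂ) : (mixedUnitary w V ρ).trace = ρ.trace := by
  simp only [mixedUnitary, trace_sum, trace_smul, trace_mul_cycle _ ρ, hV,
    smul_eq_mul, ← Finset.sum_mul, ← Complex.ofReal_sum, hw, Complex.ofReal_one, one_mul]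

theorem IsDensityMatrix.mixedUnitary (hV : ∀ k, (V k)ᴴ * V k = 1) (hw0 : ∀ k, 0 ≤ w k)
    (hw : ∑ k, w k = 1) {ρ : Matrix n n ℂ} (hρ : IsDensityMatrix ρ) :
    IsDensityMatrix (mixedUnitary w V ρ) :=
  ⟨posSemidef_sum _ fun k _ =>
      (hρ.1.mul_mul_conjTranspose_same (V k)).smul (Complex.zero_le_real.mpr (hw0 k)),
    (trace_mixedUnitary hV hw ρ).trans hρ.2⟩

theorem mixedUnitary_vecMulVec_star (hV : ∀ k, (V k)ᴴ * V k = 1) (hw : ∑ k, w k = 1)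
    {ψ : n → ℂ} (hψ : star ψ ⬝ᵥ ψ = 1) (hψV : ∀ k, ∃ c : ℂ, V k *ᵥ ψ = c • ψ) :
    mixedUnitary w V (vecMulVec ψ (star ψ)) = vecMulVec ψ (star ψ) := by
  have hfix (k : κ) : V k * vecMulVec ψ (star ψ) * (V k)ᴴ = vecMulVec ψ (star ψ) := by
    obtain ⟨c, hc⟩ := hψV k
    exact conj_vecMulVec_star_of_mulVec_eq_smul (hV k) hψ hc
  simp only [mixedUnitary, hfix, ← Finset.sum_smul, ← Complex.ofReal_sum, hw,
    Complex.ofReal_one, one_smul]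

end MixedUnitary

end GenDep

open GenDep in
theorem stmt_0_general {d : ℕ} {ι : Type*} [Fintype ι]
    (a : ι → ℝ) (V : ι → Matrix (Fin d) (Fin d) ℂ) (atot : ℝ)
    (ha : ∀ k, 0 < a k) (hatot : atot = ∑ k, a k)
    (hatot0 : 0 < atot) (hatot1 : atot < 1)
    (hV : ∀ k, IsUnitary (V k))
    (Φ : Matrix (Fin d) (Fin d) ℂ → Matrix (Fin d) (Fin d) ℂ)
    (hΦ : ∀ ρ, Φ ρ =
      (∑ k, (a k : ℂ) • (V k * ρ * (V k)ᴴ)) +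
        ((((1 : ℝ) - atot : ℝ) : ℂ) / d * ρ.trace) • 1)
    (ψ : Fin d → ℂ) (hψ : star ψ ⬝ᵥ ψ = 1)
    (hcommon : ∀ k, ∃ c : ℂ, (V k).mulVec ψ = c • ψ)
    (p : ℝ) (hp : 1 ≤ p) :
    schattenNorm p (Φ (Matrix.vecMulVec ψ (star ψ))) = maxOutputPNorm p Φ ∧
      maxOutputPNorm p Φ = maxOutputPNorm p (depolarizing d atot) := by
  set P := Matrix.vecMulVec ψ (star ψ)
  have hP := isDensityMatrix_vecMulVec_star hψ
  have hV' k : (V k)ᴴ * V k = 1 := (hV k).1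
  set w := fun k => a k / atot
  have hw : ∑ k, w k = 1 := by rw [← Finset.sum_div, ← hatot, div_self hatot0.ne']
  have hΦw ρ : Φ ρ = depolarizing d atot (mixedUnitary w V ρ) := by
    rw [hΦ, depolarizing, trace_mixedUnitary hV' hw, mixedUnitary, Finset.smul_sum]
    congr 1
    refine Finset.sum_congr rfl fun k _ => ?_
    rw [smul_smul, ← Complex.ofReal_mul, mul_div_cancel₀ _ hatot0.ne']
  have hmax ρ (hρ : IsDensityMatrix ρ) :
      schattenNorm p (depolarizing d atot ρ) ≤ schattenNorm p (depolarizing d atot P) :=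
    schattenNorm_depolarizing_le_of_isIdempotentElem hp hatot0.le hatot1.le hρ hP
      (isIdempotentElem_vecMulVec_star hψ)
  have hΦP : Φ P = depolarizing d atot P := by
    rw [hΦw, mixedUnitary_vecMulVec_star hV' hw hψ hcommon]
  have hΓgreatest : IsGreatest
      {x | ∃ ρ, IsDensityMatrix ρ ∧ x = schattenNorm p (depolarizing d atot ρ)}
      (schattenNorm p (Φ P)) :=
    ⟨⟨P, hP, by rw [hΦP]⟩, by rintro _ ⟨ρ, hρ, rfl⟩; exact hΦP ▸ hmax ρ hρ⟩
  have hΦgreatest : IsGreatest {x | ∃ ρ, IsDensityMatrix ρ ∧ x = schattenNorm p (Φ ρ)}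
      (schattenNorm p (Φ P)) := by
    refine ⟨⟨P, hP, rfl⟩, ?_⟩
    rintro _ ⟨ρ, hρ, rfl⟩
    rw [hΦw, hΦP]
    exact hmax _ (hρ.mixedUnitary hV' (fun k => (div_pos (ha k) hatot0).le) hw)
  rw [maxOutputPNorm, maxOutputPNorm, hΦgreatest.csSup_eq, hΓgreatest.csSup_eq]
  exact ⟨rfl, rfl⟩

open GenDep in
/-- For a generalized depolarizing channel whose unitaries have a common
unit eigenvector `ψ`, the output `p`-norm at `|ψ⟩⟨ψ|` equals the maximal output
`p`-norm, which equals that of the depolarizing channel with the same parameter. -/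
theorem stmt_0 {d : ℕ} (hd : 0 < d) {ι : Type*} [Fintype ι]
    (a : ι → ℝ) (V : ι → Matrix (Fin d) (Fin d) ℂ) (atot : ℝ)
    (ha : ∀ k, 0 < a k) (hatot : atot = ∑ k, a k)
    (hatot0 : 0 < atot) (hatot1 : atot < 1)
    (hV : ∀ k, IsUnitary (V k))
    (Φ : Matrix (Fin d) (Fin d) ℂ → Matrix (Fin d) (Fin d) ℂ)
    (hΦ : ∀ ρ, Φ ρ =
      (∑ k, (a k : ℂ) • (V k * ρ * (V k)ᴴ)) +
        ((((1 : ℝ) - atot : ℝ) : ℂ) / d * ρ.trace) • 1)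
    (ψ : Fin d → ℂ) (hψ : star ψ ⬝ᵥ ψ = 1)
    (hcommon : ∀ k, ∃ c : ℂ, (V k).mulVec ψ = c • ψ)
    (p : ℝ) (hp : 1 ≤ p) :
    schattenNorm p (Φ (Matrix.vecMulVec ψ (star ψ))) = maxOutputPNorm p Φ ∧
      maxOutputPNorm p Φ = maxOutputPNorm p (depolarizing d atot) :=
  stmt_0_general a V atot ha hatot hatot0 hatot1 hV Φ hΦ ψ hψ hcommon p hp
end
end

section
/- Let Φ be a generalized depolarizing channel on d×d complex matrices whose unitary matrices V_k have a common unit eigenvector ψ. Then S(Φ(|ψ⟩⟨ψ|)) = S_min(Φ) = S_min(Γ_a), where Γ_a is the depolarizing channel with the same parameter a. -/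
open scoped BigOperators Matrix Kronecker ComplexOrder

noncomputable section

/-!
Write `m = (1 - a) / d` and `M = a + m`. For a density matrix `ρ`, both `Φ ρ` and `Γ_a ρ` are of
the form `S + m • 1` with `S ≥ 0` and `Tr S = a`, so their eigenvalues are at least `m` and sum to
`1`, which forces them all into `[m, M]`. Concavity of `x ↦ -x log x` bounds each term of the
entropy below by its chord over `[m, M]`, and the chords sum to `-M log M - (d - 1) m log m`.
At `ρ = |ψ⟩⟨ψ|` every `V_k` fixes `ρ` under conjugation, so both channels output `a ρ + m • 1`,
whose eigenvalues are exactly `M` once and `m` otherwise: the chord bound is attained.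
-/

open Finset

theorem ConcaveOn.chord_le {s : Set ℝ} {f : ℝ → ℝ} (hf : ConcaveOn ℝ s f)
    {x y z : ℝ} (hx : x ∈ s) (hz : z ∈ s) (hxy : x ≤ y) (hyz : y ≤ z) :
    (z - y) * f x + (y - x) * f z ≤ (z - x) * f y := by
  rcases hxy.eq_or_lt with rfl | hxy
  · simp
  rcases hyz.eq_or_lt with rfl | hyz
  · simp
  have := hf.neg.secant_mono_aux1 hx hz hxy hyz
  simp only [Pi.neg_apply] at this
  linarith

theorem sum_chord_eq {ι : Type*} [Fintype ι] (f : ℝ → ℝ) {m M : ℝ} (x : ι → ℝ)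
    (hsum : ∑ i, x i = 1) (hconv : M + (Fintype.card ι - 1) * m = 1) :
    ∑ i, ((M - x i) * f m + (x i - m) * f M) = (M - m) * (f M + (Fintype.card ι - 1) * f m) := by
  simp only [sum_add_distrib, ← sum_mul, sum_sub_distrib, hsum, sum_const, card_univ,
    nsmul_eq_mul]
  linear_combination (f m - f M) * hconv

theorem ConcaveOn.le_sum_comp_of_le_of_sum_eq_one {ι : Type*} [Fintype ι] {s : Set ℝ}
    {f : ℝ → ℝ} (hf : ConcaveOn ℝ s f) {m M : ℝ} (hm : m ∈ s) (hM : M ∈ s) (hmM : m < M)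
    {x : ι → ℝ} (hx : ∀ i, m ≤ x i) (hsum : ∑ i, x i = 1)
    (hconv : M + (Fintype.card ι - 1) * m = 1) :
    f M + (Fintype.card ι - 1) * f m ≤ ∑ i, f (x i) := by
  classical
  have hxM : ∀ i, x i ≤ M := fun i => by
    have hrest : (Fintype.card ι - 1 : ℝ) * m ≤ ∑ j ∈ univ.erase i, x j := by
      have := card_nsmul_le_sum (univ.erase i) x m fun j _ => hx j
      rwa [card_erase_of_mem (mem_univ i), card_univ, nsmul_eq_mul,
        Nat.cast_pred (Fintype.card_pos_iff.2 ⟨i⟩)] at this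
    linarith [add_sum_erase univ x (mem_univ i)]
  refine le_of_mul_le_mul_left ?_ (sub_pos.2 hmM)
  rw [← sum_chord_eq f x hsum hconv, mul_sum]
  exact sum_le_sum fun i _ => hf.chord_le hm hM (hx i) (hxM i)

theorem sum_comp_eq_of_forall_eq_or_eq {ι : Type*} [Fintype ι] (f : ℝ → ℝ) {m M : ℝ}
    (hmM : m ≠ M) {x : ι → ℝ} (hx : ∀ i, x i = m ∨ x i = M) (hsum : ∑ i, x i = 1)
    (hconv : M + (Fintype.card ι - 1) * m = 1) :
    ∑ i, f (x i) = f M + (Fintype.card ι - 1) * f m := by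
  refine mul_left_cancel₀ (sub_ne_zero.2 hmM.symm) ?_
  rw [← sum_chord_eq f x hsum hconv, mul_sum]
  refine sum_congr rfl fun i _ => ?_
  rcases hx i with h | h <;> rw [h] <;> ring

namespace Matrix.IsHermitian

variable {n : Type*} [Fintype n] [DecidableEq n] {A : Matrix n n ℂ} (hA : A.IsHermitian)

theorem star_eigenvectorBasis_dotProduct_self (i : n) :
    star ⇑(hA.eigenvectorBasis i) ⬝ᵥ ⇑(hA.eigenvectorBasis i) = 1 := by
  rw [dotProduct_comm, ← EuclideanSpace.inner_eq_star_dotProduct, inner_self_eq_norm_sq_to_K,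
    hA.eigenvectorBasis.orthonormal.1 i]
  simp

theorem sub_smul_one_mulVec_eigenvectorBasis (c : ℝ) (i : n) :
    (A - (c : ℂ) • 1) *ᵥ ⇑(hA.eigenvectorBasis i)
      = ((hA.eigenvalues i - c : ℝ) : ℂ) • ⇑(hA.eigenvectorBasis i) := by
  rw [sub_mulVec, smul_mulVec, one_mulVec, hA.mulVec_eigenvectorBasis, Complex.ofReal_sub,
    sub_smul, Complex.coe_smul (hA.eigenvalues i)]

theorem le_eigenvalues_of_posSemidef_sub {c : ℝ} (h : (A - (c : ℂ) • 1).PosSemidef) (i : n) :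
    c ≤ hA.eigenvalues i := by
  have := h.dotProduct_mulVec_nonneg (hA.eigenvectorBasis i)
  rw [hA.sub_smul_one_mulVec_eigenvectorBasis, dotProduct_smul,
    hA.star_eigenvectorBasis_dotProduct_self, smul_eq_mul, mul_one, Complex.zero_le_real] at this
  linarith

theorem eigenvalues_eq_or_eq_of_mul_eq_zero {m M : ℝ}
    (h : (A - (m : ℂ) • 1) * (A - (M : ℂ) • 1) = 0) (i : n) :
    hA.eigenvalues i = m ∨ hA.eigenvalues i = M := by
  have hv := congrArg (· *ᵥ ⇑(hA.eigenvectorBasis i)) h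
  simp only [← mulVec_mulVec, hA.sub_smul_one_mulVec_eigenvectorBasis, mulVec_smul, smul_smul,
    zero_mulVec] at hv
  rcases smul_eq_zero.1 hv with hc | hv
  · norm_cast at hc
    rcases mul_eq_zero.1 hc with hc | hc
    · exact .inr (sub_eq_zero.1 hc)
    · exact .inl (sub_eq_zero.1 hc)
  · simpa [hv] using hA.star_eigenvectorBasis_dotProduct_self i

theorem sum_eigenvalues_eq_one (htr : A.trace = 1) : ∑ i, hA.eigenvalues i = 1 := by
  simpa [htr] using congrArg Complex.re hA.trace_eq_sum_eigenvalues.symm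

end Matrix.IsHermitian

namespace GenDep

open Real Matrix

variable {n ι : Type*} [Fintype n] [Fintype ι]

theorem posSemidef_sum_smul_conj {a : ι → ℝ} (ha : ∀ k, 0 ≤ a k) (V : ι → Matrix n n ℂ)
    {ρ : Matrix n n ℂ} (hρ : ρ.PosSemidef) :
    (∑ k, (a k : ℂ) • (V k * ρ * (V k)ᴴ)).PosSemidef :=
  posSemidef_sum _ fun k _ =>
    (hρ.mul_mul_conjTranspose_same (V k)).smul (Complex.zero_le_real.2 (ha k))

variable [DecidableEq n]

theorem trace_sum_smul_conj (a : ι → ℝ) {V : ι → Matrix n n ℂ} (hV : ∀ k, IsUnitary (V k))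
    (ρ : Matrix n n ℂ) :
    (∑ k, (a k : ℂ) • (V k * ρ * (V k)ᴴ)).trace = (∑ k, a k : ℝ) * ρ.trace := by
  simp only [trace_sum, trace_smul, trace_mul_cycle, (hV _).1, one_mul, smul_eq_mul,
    Complex.ofReal_sum, Finset.sum_mul]

theorem conj_vecMulVec_of_mulVec_eq_smul {V : Matrix n n ℂ} (hV : IsUnitary V) {ψ : n → ℂ}
    (hψ : star ψ ⬝ᵥ ψ = 1) {c : ℂ} (hc : V *ᵥ ψ = c • ψ) :
    V * vecMulVec ψ (star ψ) * Vᴴ = vecMulVec ψ (star ψ) := by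
  have hnorm : star (V *ᵥ ψ) ⬝ᵥ (V *ᵥ ψ) = 1 := by
    rw [star_mulVec, dotProduct_mulVec, vecMul_vecMul, hV.1, vecMul_one, hψ]
  rw [hc, star_smul, smul_dotProduct, dotProduct_smul, hψ, smul_eq_mul, smul_eq_mul,
    mul_one] at hnorm
  rw [mul_vecMulVec, vecMulVec_mul, ← star_mulVec, hc, star_smul]
  ext i j
  simp only [vecMulVec_apply, Pi.smul_apply, smul_eq_mul]
  linear_combination ψ i * star (ψ j) * hnorm

theorem vNEntropy_eq_sum_negMulLog {A : Matrix n n ℂ} (hA : A.IsHermitian) :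
    vNEntropy A = ∑ i, negMulLog (hA.eigenvalues i) := by
  simp only [vNEntropy, dif_pos hA, negMulLog, neg_mul, Finset.sum_neg_distrib]

theorem minOutputEntropy_eq {Ψ : Matrix n n ℂ → Matrix n n ℂ} {E : ℝ} {ρ₀ : Matrix n n ℂ}
    (hρ₀ : IsDensityMatrix ρ₀) (hE : vNEntropy (Ψ ρ₀) = E)
    (hle : ∀ ρ, IsDensityMatrix ρ → E ≤ vNEntropy (Ψ ρ)) :
    minOutputEntropy Ψ = E :=
  IsLeast.csInf_eq ⟨⟨ρ₀, hρ₀, hE.symm⟩, by rintro _ ⟨ρ, hρ, rfl⟩; exact hle ρ hρ⟩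

def depolarizingMinEntropy (d : ℕ) (a : ℝ) : ℝ :=
  negMulLog (a + (1 - a) / d) + (d - 1) * negMulLog ((1 - a) / d)

theorem trace_add_smul_one {S : Matrix n n ℂ} {a : ℝ} (htr : S.trace = a)
    (hn : 0 < Fintype.card n) :
    (S + (((1 - a) / Fintype.card n : ℝ) : ℂ) • 1).trace = 1 := by
  have : (Fintype.card n : ℂ) ≠ 0 := by exact_mod_cast hn.ne'
  rw [trace_add, trace_smul, trace_one, htr, smul_eq_mul]
  push_cast
  rw [div_mul_cancel₀ _ this]
  ring

theorem depolarizingMinEntropy_le_vNEntropy {S : Matrix n n ℂ} (hS : S.PosSemidef) {a : ℝ}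
    (htr : S.trace = a) (ha0 : 0 < a) (ha1 : a ≤ 1) (hn : 0 < Fintype.card n) :
    depolarizingMinEntropy (Fintype.card n) a
      ≤ vNEntropy (S + (((1 - a) / Fintype.card n : ℝ) : ℂ) • 1) := by
  set m : ℝ := (1 - a) / Fintype.card n with hm
  have hm0 : 0 ≤ m := div_nonneg (by linarith) (Nat.cast_nonneg _)
  have hσ : (S + (m : ℂ) • 1).IsHermitian :=
    hS.1.add (PosSemidef.one.smul (Complex.zero_le_real.2 hm0)).1
  have hσm : (S + (m : ℂ) • 1 - (m : ℂ) • 1).PosSemidef := by rwa [add_sub_cancel_right]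
  rw [vNEntropy_eq_sum_negMulLog hσ, depolarizingMinEntropy]
  refine concaveOn_negMulLog.le_sum_comp_of_le_of_sum_eq_one (Set.mem_Ici.2 hm0)
    (Set.mem_Ici.2 (by positivity)) (by linarith) (hσ.le_eigenvalues_of_posSemidef_sub hσm)
    (hσ.sum_eigenvalues_eq_one (trace_add_smul_one htr hn)) ?_
  rw [hm]
  field_simp
  ring

theorem vNEntropy_smul_vecMulVec_add_smul_one {ψ : n → ℂ} (hψ : star ψ ⬝ᵥ ψ = 1) {a : ℝ}
    (ha : a ≠ 0) (hn : 0 < Fintype.card n) :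
    vNEntropy ((a : ℂ) • vecMulVec ψ (star ψ) + (((1 - a) / Fintype.card n : ℝ) : ℂ) • 1)
      = depolarizingMinEntropy (Fintype.card n) a := by
  set P := vecMulVec ψ (star ψ)
  set m : ℝ := (1 - a) / Fintype.card n
  have hPP : P * P = P := by rw [vecMulVec_mul_vecMulVec, hψ, one_smul]
  have hσ : ((a : ℂ) • P + (m : ℂ) • 1).IsHermitian :=
    ((posSemidef_vecMulVec_self_star ψ).1.smul (Complex.conj_ofReal a)).add
      (isHermitian_one.smul (Complex.conj_ofReal m))
  have hquad : ((a : ℂ) • P + (m : ℂ) • 1 - (m : ℂ) • 1)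
      * ((a : ℂ) • P + (m : ℂ) • 1 - ((a + m : ℝ) : ℂ) • 1) = 0 := by
    rw [add_sub_cancel_right, Complex.ofReal_add, add_smul, add_sub_add_right_eq_sub, ← smul_sub,
      smul_mul_smul, mul_sub, mul_one, hPP, sub_self, smul_zero]
  have htr : ((a : ℂ) • P).trace = a := by
    rw [trace_smul, trace_vecMulVec, dotProduct_comm, hψ, smul_eq_mul, mul_one]
  rw [vNEntropy_eq_sum_negMulLog hσ, depolarizingMinEntropy]
  refine sum_comp_eq_of_forall_eq_or_eq negMulLog (by simpa using ha)
    (hσ.eigenvalues_eq_or_eq_of_mul_eq_zero hquad)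
    (hσ.sum_eigenvalues_eq_one (trace_add_smul_one htr hn)) ?_
  field_simp
  ring

end GenDep

open GenDep in
/-- the minimal output entropy of a generalized depolarizing channel whose
unitaries have a common unit eigenvector `ψ` is attained at `|ψ⟩⟨ψ|` and equals that of
the depolarizing channel with the same parameter. -/
theorem stmt_2 {d : ℕ} (hd : 0 < d) {ι : Type*} [Fintype ι]
    (a : ι → ℝ) (V : ι → Matrix (Fin d) (Fin d) ℂ) (atot : ℝ)
    (ha : ∀ k, 0 < a k) (hatot : atot = ∑ k, a k)
    (hatot0 : 0 < atot) (hatot1 : atot < 1)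
    (hV : ∀ k, IsUnitary (V k))
    (Φ : Matrix (Fin d) (Fin d) ℂ → Matrix (Fin d) (Fin d) ℂ)
    (hΦ : ∀ ρ, Φ ρ =
      (∑ k, (a k : ℂ) • (V k * ρ * (V k)ᴴ)) +
        ((((1 : ℝ) - atot : ℝ) : ℂ) / d * ρ.trace) • 1)
    (ψ : Fin d → ℂ) (hψ : star ψ ⬝ᵥ ψ = 1)
    (hcommon : ∀ k, ∃ c : ℂ, (V k).mulVec ψ = c • ψ) :
    vNEntropy (Φ (Matrix.vecMulVec ψ (star ψ))) = minOutputEntropy Φ ∧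
      minOutputEntropy Φ = minOutputEntropy (depolarizing d atot) := by
  set P := Matrix.vecMulVec ψ (star ψ)
  have hn : 0 < Fintype.card (Fin d) := by simpa using hd
  have hP : IsDensityMatrix P :=
    ⟨Matrix.posSemidef_vecMulVec_self_star ψ, by rw [Matrix.trace_vecMulVec, dotProduct_comm, hψ]⟩
  have hnoise : ∀ ρ : Matrix (Fin d) (Fin d) ℂ, IsDensityMatrix ρ →
      (((1 : ℝ) - atot : ℝ) : ℂ) / d * ρ.trace = (((1 - atot) / Fintype.card (Fin d) : ℝ) : ℂ) :=
    fun ρ hρ => by simp [hρ.2]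
  have hΦP : Φ P = (atot : ℂ) • P + (((1 - atot) / Fintype.card (Fin d) : ℝ) : ℂ) • 1 := by
    rw [hΦ, hnoise P hP, hatot, Complex.ofReal_sum, Finset.sum_smul]
    congr 1
    refine Finset.sum_congr rfl fun k _ => ?_
    obtain ⟨c, hc⟩ := hcommon k
    rw [conj_vecMulVec_of_mulVec_eq_smul (hV k) hψ hc]
  have hΓP : depolarizing d atot P = (atot : ℂ) • P
      + (((1 - atot) / Fintype.card (Fin d) : ℝ) : ℂ) • 1 := by
    rw [depolarizing, hnoise P hP]
  have hEP := vNEntropy_smul_vecMulVec_add_smul_one hψ hatot0.ne' hn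
  have hminΦ : minOutputEntropy Φ = depolarizingMinEntropy (Fintype.card (Fin d)) atot := by
    refine minOutputEntropy_eq hP (hΦP ▸ hEP) fun ρ hρ => ?_
    rw [hΦ, hnoise ρ hρ]
    refine depolarizingMinEntropy_le_vNEntropy (posSemidef_sum_smul_conj (fun k => (ha k).le) V hρ.1)
      ?_ hatot0 hatot1.le hn
    rw [trace_sum_smul_conj a hV, hρ.2, ← hatot, mul_one]
  have hminΓ : minOutputEntropy (depolarizing d atot)
      = depolarizingMinEntropy (Fintype.card (Fin d)) atot := by
    refine minOutputEntropy_eq hP (hΓP ▸ hEP) fun ρ hρ => ?_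
    rw [depolarizing, hnoise ρ hρ]
    refine depolarizingMinEntropy_le_vNEntropy (hρ.1.smul (Complex.zero_le_real.2 hatot0.le))
      ?_ hatot0 hatot1.le hn
    rw [Matrix.trace_smul, hρ.2, smul_eq_mul, mul_one]
  exact ⟨by rw [hminΦ, hΦP, hEP], by rw [hminΦ, hminΓ]⟩
end
end

section
/- Let Ω be a channel on d×d complex matrices and let Ω̂ denote its adjoint with respect to the Hilbert–Schmidt inner product ⟨A, B⟩ = Tr(A†B). Let A be a positive definite d×d matrix and ρ a density matrix such that Ω(ρ) is positive definite. Let ψ be a unit eigenvector of the Hermitian matrix Ω̂(log Ω(ρ) − log A) corresponding to its largest eigenvalue. Then H(Ω(|ψ⟩⟨ψ|), A) ≥ H(Ω(ρ), A). -/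
open scoped BigOperators Matrix Kronecker ComplexOrder

noncomputable section

/-! Put `L = log Ω(ρ) - log A` and `M = Ω̂(L)`; `M` is Hermitian because a positive linear map
commutes with `ᴴ`, and `λ` is its largest eigenvalue. The adjoint relation turns `Tr(L Ω(X))` into
`Tr(M X)`, so `H(Ω(ρ), A) = Tr(M ρ) ≤ λ`, whereas for `σ = |ψ⟩⟨ψ|`
`H(Ω(σ), A) = H(Ω(σ), Ω(ρ)) + ⟨ψ, M ψ⟩ = H(Ω(σ), Ω(ρ)) + λ ≥ λ` by Klein's inequality.

Klein's inequality `Tr(σ - τ) ≤ H(σ, τ)` is proved in eigenbases `u` of `σ` and `v` of `τ`: with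
the doubly stochastic weights `wᵢⱼ = |⟨uᵢ, vⱼ⟩|²` both sides become sums
`∑ wᵢⱼ (pᵢ - qⱼ) ≤ ∑ wᵢⱼ pᵢ (log pᵢ - log qⱼ)`, which holds termwise. -/

namespace GenDep

open scoped MatrixOrder
open Matrix

section General

variable {n : Type*} [Fintype n]

lemma trace_mul_vecMulVec_star (M : Matrix n n ℂ) (v : n → ℂ) :
    (M * vecMulVec v (star v)).trace = star v ⬝ᵥ M *ᵥ v := by
  rw [mul_vecMulVec, trace_vecMulVec, dotProduct_comm]

lemma trace_mul_nonneg_of_posSemidef {P Q : Matrix n n ℂ} (hP : P.PosSemidef) (hQ : Q.PosSemidef) :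
    0 ≤ (P * Q).trace := by
  obtain ⟨m, v, rfl⟩ := posSemidef_iff_eq_sum_vecMulVec.mp hP
  rw [Finset.sum_mul, trace_sum]
  refine Finset.sum_nonneg fun i _ => ?_
  rw [trace_mul_comm, trace_mul_vecMulVec_star]
  exact hQ.dotProduct_mulVec_nonneg _

lemma isHermitian_adjoint_apply {Φ Ψ : Matrix n n ℂ → Matrix n n ℂ}
    (hΦ : ∀ B, Φ Bᴴ = (Φ B)ᴴ) (hadj : ∀ A B, (Aᴴ * Φ B).trace = ((Ψ A)ᴴ * B).trace)
    {L : Matrix n n ℂ} (hL : L.IsHermitian) : (Ψ L).IsHermitian := by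
  have key : ∀ B, (L * Φ B).trace = ((Ψ L)ᴴ * B).trace := fun B => by
    simpa only [hL.eq] using hadj L B
  refine ext_iff_trace_mul_right.mpr fun B => ?_
  calc ((Ψ L)ᴴ * B).trace = star ((Φ B * L)ᴴ).trace := by
        rw [← key, trace_conjTranspose, star_star, trace_mul_comm]
    _ = star ((Ψ L)ᴴ * Bᴴ).trace := by rw [← key, hΦ, conjTranspose_mul, hL.eq]
    _ = (Ψ L * B).trace := by
        rw [← conjTranspose_mul, trace_conjTranspose, star_star, trace_mul_comm]

variable [DecidableEq n]

lemma posSemidef_smul_one_sub {M : Matrix n n ℂ} (hM : M.IsHermitian) {c : ℝ}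
    (h : ∀ i, hM.eigenvalues i ≤ c) : ((c : ℂ) • 1 - M).PosSemidef := by
  have : M ≤ algebraMap ℝ (Matrix n n ℂ) c := by
    refine le_algebraMap_of_spectrum_le (fun x hx => ?_) hM.isSelfAdjoint
    rw [hM.spectrum_real_eq_range_eigenvalues] at hx
    obtain ⟨i, rfl⟩ := hx
    exact h i
  rwa [Matrix.le_iff, Algebra.algebraMap_eq_smul_one, ← Complex.coe_smul] at this

lemma re_trace_mul_le_of_eigenvalues_le {M ρ : Matrix n n ℂ} (hM : M.IsHermitian) {c : ℝ}
    (h : ∀ i, hM.eigenvalues i ≤ c) (hρ : ρ.PosSemidef) :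
    (M * ρ).trace.re ≤ c * ρ.trace.re := by
  have := trace_mul_nonneg_of_posSemidef (posSemidef_smul_one_sub hM h) hρ
  rw [sub_mul, smul_mul, one_mul, trace_sub, trace_smul, Complex.nonneg_iff] at this
  simpa [sub_nonneg] using this.1

lemma trace_conj_diagonal_mul_conj_diagonal (U V : Matrix n n ℂ) (a b : n → ℂ) :
    ((U * diagonal a * star U) * (V * diagonal b * star V)).trace
      = ∑ i, ∑ j, a i * b j * Complex.normSq ((star U * V) i j) := by
  set W := star U * V
  have hW : star W = star V * U := by simp [W, star_mul]
  have hentry : ∀ i j, (diagonal a * W * diagonal b) i j = a i * W i j * b j := by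
    simp [mul_diagonal, diagonal_mul]
  calc ((U * diagonal a * star U) * (V * diagonal b * star V)).trace
      = (diagonal a * W * diagonal b * star W).trace := by
        simp only [hW, W, Matrix.mul_assoc]
        rw [trace_mul_comm]
        simp only [Matrix.mul_assoc]
    _ = ∑ i, ∑ j, a i * b j * Complex.normSq (W i j) := by
        simp only [trace, diag, mul_apply (N := star W), hentry, star_apply, Complex.star_def]
        refine Finset.sum_congr rfl fun i _ => Finset.sum_congr rfl fun j _ => ?_
        rw [Complex.normSq_eq_conj_mul_self]
        ring

lemma sum_normSq_row_of_mem_unitary {W : Matrix n n ℂ} (hW : W ∈ unitary (Matrix n n ℂ)) (i : n) :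
    ∑ j, Complex.normSq (W i j) = 1 := by
  have := Matrix.ext_iff.mpr (Unitary.mul_star_self_of_mem hW) i i
  simp only [mul_apply, star_apply, one_apply_eq, Complex.star_def, Complex.mul_conj] at this
  exact_mod_cast this

lemma sum_normSq_col_of_mem_unitary {W : Matrix n n ℂ} (hW : W ∈ unitary (Matrix n n ℂ)) (j : n) :
    ∑ i, Complex.normSq (W i j) = 1 := by
  have := Matrix.ext_iff.mpr (Unitary.star_mul_self_of_mem hW) j j
  simp only [mul_apply, star_apply, one_apply_eq, Complex.star_def,
    ← Complex.normSq_eq_conj_mul_self] at this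
  exact_mod_cast this

lemma sub_le_mul_log_sub_log {p q : ℝ} (hp : 0 ≤ p) (hq : 0 < q) :
    p - q ≤ p * (Real.log p - Real.log q) := by
  rcases hp.eq_or_lt with rfl | hp
  · simpa using hq.le
  have := mul_nonneg hq.le (InformationTheory.klFun_nonneg (div_nonneg hp.le hq.le))
  rw [InformationTheory.klFun_apply, Real.log_div hp.ne' hq.ne'] at this
  field_simp at this
  linarith

lemma matLog_of_isHermitian {A : Matrix n n ℂ} (hA : A.IsHermitian) :
    matLog A = (hA.eigenvectorUnitary : Matrix n n ℂ) *
      diagonal (fun i => (Real.log (hA.eigenvalues i) : ℂ)) *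
      star (hA.eigenvectorUnitary : Matrix n n ℂ) :=
  dif_pos hA

lemma isHermitian_matLog (A : Matrix n n ℂ) : (matLog A).IsHermitian := by
  unfold matLog
  split_ifs
  · rw [star_eq_conjTranspose]
    exact isHermitian_mul_mul_conjTranspose _
      (isHermitian_diagonal_iff.mpr fun _ => Complex.conj_ofReal _)
  · exact isHermitian_zero

/-- `|⟨uᵢ, vⱼ⟩|²` for the eigenbases `u` of `σ` and `v` of `τ`. -/
def eigenbasisOverlap {σ τ : Matrix n n ℂ} (hσ : σ.IsHermitian) (hτ : τ.IsHermitian) :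
    Matrix n n ℝ :=
  fun i j => Complex.normSq ((star (hσ.eigenvectorUnitary : Matrix n n ℂ) *
    (hτ.eigenvectorUnitary : Matrix n n ℂ)) i j)

section eigenbasisOverlap

variable {σ τ : Matrix n n ℂ} (hσ : σ.IsHermitian) (hτ : τ.IsHermitian)

lemma eigenbasisOverlap_nonneg (i j : n) : 0 ≤ eigenbasisOverlap hσ hτ i j :=
  Complex.normSq_nonneg _

lemma eigenbasisOverlap_mem_unitary :
    star (hσ.eigenvectorUnitary : Matrix n n ℂ) * (hτ.eigenvectorUnitary : Matrix n n ℂ) ∈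
      unitary (Matrix n n ℂ) :=
  mul_mem (Unitary.star_mem (SetLike.coe_mem _)) (SetLike.coe_mem _)

lemma sum_eigenbasisOverlap_row (i : n) : ∑ j, eigenbasisOverlap hσ hτ i j = 1 :=
  sum_normSq_row_of_mem_unitary (eigenbasisOverlap_mem_unitary hσ hτ) i

lemma sum_eigenbasisOverlap_col (j : n) : ∑ i, eigenbasisOverlap hσ hτ i j = 1 :=
  sum_normSq_col_of_mem_unitary (eigenbasisOverlap_mem_unitary hσ hτ) j

lemma eigenbasisOverlap_self : eigenbasisOverlap hσ hσ = 1 := by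
  ext i j
  simp [eigenbasisOverlap, Unitary.star_mul_self_of_mem (SetLike.coe_mem _), one_apply, apply_ite]

lemma trace_mul_matLog :
    (σ * matLog τ).trace = ∑ i, ∑ j,
      ((hσ.eigenvalues i * Real.log (hτ.eigenvalues j) * eigenbasisOverlap hσ hτ i j : ℝ) : ℂ) := by
  conv_lhs => rw [hσ.spectral_theorem, Unitary.conjStarAlgAut_apply, matLog_of_isHermitian hτ,
    trace_conj_diagonal_mul_conj_diagonal]
  push_cast
  rfl

lemma relEntropyR_eq_sum_eigenbasisOverlap : relEntropyR σ τ = ∑ i, ∑ j,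
    eigenbasisOverlap hσ hτ i j * (hσ.eigenvalues i *
      (Real.log (hσ.eigenvalues i) - Real.log (hτ.eigenvalues j))) := by
  have hself := trace_mul_matLog hσ hσ
  rw [eigenbasisOverlap_self] at hself
  rw [relEntropyR, mul_sub, trace_sub, hself, trace_mul_matLog hσ hτ]
  simp only [← Complex.ofReal_sum, ← Complex.ofReal_sub, Complex.ofReal_re]
  simp only [one_apply, mul_ite, mul_one, mul_zero, Finset.sum_ite_eq, Finset.mem_univ, if_true,
    mul_sub, Finset.sum_sub_distrib, ← Finset.sum_mul, sum_eigenbasisOverlap_row, one_mul]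
  simp only [mul_comm]

end eigenbasisOverlap

theorem re_trace_sub_le_relEntropyR {σ τ : Matrix n n ℂ} (hσ : σ.PosSemidef) (hτ : τ.PosDef) :
    (σ - τ).trace.re ≤ relEntropyR σ τ := by
  have htr : (σ - τ).trace.re = ∑ i, ∑ j,
      eigenbasisOverlap hσ.1 hτ.1 i j * (hσ.1.eigenvalues i - hτ.1.eigenvalues j) := by
    rw [trace_sub, hσ.1.trace_eq_sum_eigenvalues, hτ.1.trace_eq_sum_eigenvalues]
    simp only [Complex.sub_re, Complex.re_sum, mul_sub, Finset.sum_sub_distrib,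
      ← Finset.sum_mul, sum_eigenbasisOverlap_row, one_mul]
    rw [Finset.sum_comm]
    simp only [← Finset.sum_mul, sum_eigenbasisOverlap_col, one_mul]
    rfl
  rw [htr, relEntropyR_eq_sum_eigenbasisOverlap hσ.1 hτ.1]
  exact Finset.sum_le_sum fun i _ => Finset.sum_le_sum fun j _ =>
    mul_le_mul_of_nonneg_left (sub_le_mul_log_sub_log (hσ.eigenvalues_nonneg i)
      (hτ.eigenvalues_pos j)) (eigenbasisOverlap_nonneg _ _ i j)

lemma relEntropyR_nonneg {σ τ : Matrix n n ℂ} (hσ : IsDensityMatrix σ) (hτ : τ.PosDef)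
    (hτ₁ : τ.trace = 1) : 0 ≤ relEntropyR σ τ := by
  simpa [hσ.2, hτ₁] using re_trace_sub_le_relEntropyR hσ.1 hτ

lemma relEntropyR_self (σ : Matrix n n ℂ) : relEntropyR σ σ = 0 := by
  simp [relEntropyR]

lemma relEntropyR_eq_add (σ τ γ : Matrix n n ℂ) :
    relEntropyR σ γ = relEntropyR σ τ + ((matLog τ - matLog γ) * σ).trace.re := by
  rw [relEntropyR, relEntropyR, trace_mul_comm _ σ, ← Complex.add_re, ← trace_add, ← mul_add,
    sub_add_sub_cancel]

end General

namespace IsChannel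

variable {d : ℕ} {Ω : Matrix (Fin d) (Fin d) ℂ → Matrix (Fin d) (Fin d) ℂ}

lemma posSemidef_apply (hΩ : IsChannel Ω) {X : Matrix (Fin d) (Fin d) ℂ} (hX : X.PosSemidef) :
    (Ω X).PosSemidef := by
  have hX' : (X.submatrix (Prod.snd : Fin 1 × Fin d → Fin d) Prod.snd).PosSemidef :=
    hX.submatrix _
  have hΩX : Ω X = (tensorMap (id : Matrix (Fin 1) (Fin 1) ℂ → Matrix (Fin 1) (Fin 1) ℂ) Ω
      (X.submatrix Prod.snd Prod.snd)).submatrix (fun j => (0, j)) (fun j => (0, j)) := by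
    ext j l
    simp only [tensorMap, submatrix_apply, Fin.sum_univ_one, id_eq, kroneckerMap_apply,
      single_apply_same, one_mul]
    rfl
  rw [hΩX]
  exact (hΩ.cp 1 _ hX').submatrix _

lemma isDensityMatrix_apply (hΩ : IsChannel Ω) {X : Matrix (Fin d) (Fin d) ℂ}
    (hX : IsDensityMatrix X) : IsDensityMatrix (Ω X) :=
  ⟨hΩ.posSemidef_apply hX.1, (hΩ.trace_preserving X).trans hX.2⟩

def toPositiveLinearMap (hΩ : IsChannel Ω) :
    Matrix (Fin d) (Fin d) ℂ →ₚ[ℂ] Matrix (Fin d) (Fin d) ℂ :=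
  .mk₀ ⟨⟨Ω, hΩ.map_add⟩, hΩ.map_smul⟩ fun _ hX =>
    (hΩ.posSemidef_apply (nonneg_iff_posSemidef.mp hX)).nonneg

lemma map_conjTranspose (hΩ : IsChannel Ω) (B : Matrix (Fin d) (Fin d) ℂ) : Ω Bᴴ = (Ω B)ᴴ :=
  map_star hΩ.toPositiveLinearMap B

end IsChannel

end GenDep

open GenDep in
theorem stmt_9_general {d : ℕ}
    (Ω Ωhat : Matrix (Fin d) (Fin d) ℂ → Matrix (Fin d) (Fin d) ℂ)
    (hΩ : IsChannel Ω)
    (hAdj : ∀ A B : Matrix (Fin d) (Fin d) ℂ,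
      Matrix.trace (Aᴴ * Ω B) = Matrix.trace ((Ωhat A)ᴴ * B))
    (A : Matrix (Fin d) (Fin d) ℂ)
    (ρ : Matrix (Fin d) (Fin d) ℂ) (hρ : IsDensityMatrix ρ)
    (hΩρ : (Ω ρ).PosDef)
    (lam : ℝ) (ψ : Fin d → ℂ) (hψ : star ψ ⬝ᵥ ψ = 1)
    (hψeig : (Ωhat (matLog (Ω ρ) - matLog A)).mulVec ψ = (lam : ℂ) • ψ)
    (hlam : ∀ (x : Fin d → ℂ) (μ : ℝ), x ≠ 0 →
      (Ωhat (matLog (Ω ρ) - matLog A)).mulVec x = (μ : ℂ) • x → μ ≤ lam) :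
    relEntropyR (Ω ρ) A ≤ relEntropyR (Ω (Matrix.vecMulVec ψ (star ψ))) A := by
  set σ := Matrix.vecMulVec ψ (star ψ)
  set L := matLog (Ω ρ) - matLog A
  have hL : L.IsHermitian := (isHermitian_matLog _).sub (isHermitian_matLog _)
  have hM : (Ωhat L).IsHermitian := isHermitian_adjoint_apply hΩ.map_conjTranspose hAdj hL
  have htrace : ∀ B, (L * Ω B).trace = (Ωhat L * B).trace := fun B => by
    simpa only [hL.eq, hM.eq] using hAdj L B
  have hev : ∀ i, hM.eigenvalues i ≤ lam := fun i =>
    hlam _ _ ((WithLp.ofLp_eq_zero (p := 2)).not.mpr (hM.eigenvectorBasis.orthonormal.ne_zero i))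
      (by rw [hM.mulVec_eigenvectorBasis, Complex.coe_smul])
  have hρA : relEntropyR (Ω ρ) A ≤ lam := by
    calc relEntropyR (Ω ρ) A = (Ωhat L * ρ).trace.re := by
          rw [relEntropyR_eq_add _ (Ω ρ), relEntropyR_self, zero_add, htrace]
      _ ≤ lam * ρ.trace.re := re_trace_mul_le_of_eigenvalues_le hM hev hρ.1
      _ = lam := by simp [hρ.2]
  have hσ : IsDensityMatrix σ :=
    ⟨Matrix.posSemidef_vecMulVec_self_star ψ, by rw [Matrix.trace_vecMulVec, dotProduct_comm, hψ]⟩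
  have hσA : relEntropyR (Ω σ) A = relEntropyR (Ω σ) (Ω ρ) + lam := by
    rw [relEntropyR_eq_add _ (Ω ρ), htrace, trace_mul_vecMulVec_star, hψeig, dotProduct_smul, hψ]
    simp
  have hklein := relEntropyR_nonneg (hΩ.isDensityMatrix_apply hσ) hΩρ
    ((hΩ.trace_preserving ρ).trans hρ.2)
  linarith

open GenDep in
/-- Shor's optimization step: if `ψ` is a unit eigenvector for the
largest eigenvalue of `Ω̂(log Ω(ρ) - log A)`, then
`H(Ω(|ψ⟩⟨ψ|), A) ≥ H(Ω(ρ), A)`. -/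
theorem stmt_9 {d : ℕ}
    (Ω Ωhat : Matrix (Fin d) (Fin d) ℂ → Matrix (Fin d) (Fin d) ℂ)
    (hΩ : IsChannel Ω)
    (hAdj : ∀ A B : Matrix (Fin d) (Fin d) ℂ,
      Matrix.trace (Aᴴ * Ω B) = Matrix.trace ((Ωhat A)ᴴ * B))
    (A : Matrix (Fin d) (Fin d) ℂ) (hA : A.PosDef)
    (ρ : Matrix (Fin d) (Fin d) ℂ) (hρ : IsDensityMatrix ρ)
    (hΩρ : (Ω ρ).PosDef)
    (lam : ℝ) (ψ : Fin d → ℂ) (hψ : star ψ ⬝ᵥ ψ = 1)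
    (hψeig : (Ωhat (matLog (Ω ρ) - matLog A)).mulVec ψ = (lam : ℂ) • ψ)
    (hlam : ∀ (x : Fin d → ℂ) (μ : ℝ), x ≠ 0 →
      (Ωhat (matLog (Ω ρ) - matLog A)).mulVec x = (μ : ℂ) • x → μ ≤ lam) :
    relEntropyR (Ω ρ) A ≤ relEntropyR (Ω (Matrix.vecMulVec ψ (star ψ))) A :=
  stmt_9_general Ω Ωhat hΩ hAdj A ρ hρ hΩρ lam ψ hψ hψeig hlam
end
end

section
/- Let d ≥ 2, 0 < a < 1, p > 1, and let x_1 ≥ x_2 ≥ … ≥ x_d ≥ 0 satisfy Σ_{i=1}^d x_i = 1 and x_1 < 1. Then Σ_{i=1}^d (a x_i + (1−a)/d)^p < (a + (1−a)/d)^p + (d−1)((1−a)/d)^p. -/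
/-!
With `c = (1 - a) / d`, each term is `f ((1 - x i) c + x i (a + c))` for the strictly convex
`f = (·) ^ p`, so it lies below the chord value `(1 - x i) f c + x i f (a + c)`, strictly for
`0 < x 0 < 1`. Summing the chord values and using `∑ x i = 1` gives the right-hand side.
-/

open scoped BigOperators Matrix Kronecker ComplexOrder

noncomputable section

section ConvexCombination

variable {ι : Type*} [Fintype ι] {s : Set ℝ} {f : ℝ → ℝ} {u v : ℝ}

theorem ConvexOn.apply_combo_le (hf : ConvexOn ℝ s f) (hu : u ∈ s) (hv : v ∈ s) {t : ℝ}
    (ht0 : 0 ≤ t) (ht1 : t ≤ 1) :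
    f ((1 - t) * u + t * v) ≤ (1 - t) * f u + t * f v :=
  hf.2 hu hv (sub_nonneg.2 ht1) ht0 (sub_add_cancel 1 t)

theorem StrictConvexOn.apply_combo_lt (hf : StrictConvexOn ℝ s f) (hu : u ∈ s) (hv : v ∈ s)
    (huv : u ≠ v) {t : ℝ} (ht0 : 0 < t) (ht1 : t < 1) :
    f ((1 - t) * u + t * v) < (1 - t) * f u + t * f v :=
  hf.2 hu hv huv (sub_pos.2 ht1) ht0 (sub_add_cancel 1 t)

theorem StrictConvexOn.sum_apply_combo_lt (hf : StrictConvexOn ℝ s f) (hu : u ∈ s) (hv : v ∈ s)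
    (huv : u ≠ v) {x : ι → ℝ} (hx0 : ∀ i, 0 ≤ x i) (hx1 : ∀ i, x i ≤ 1) (hsum : ∑ i, x i = 1)
    {j : ι} (hj0 : 0 < x j) (hj1 : x j < 1) :
    ∑ i, f ((1 - x i) * u + x i * v) < f v + ((Fintype.card ι : ℝ) - 1) * f u :=
  calc ∑ i, f ((1 - x i) * u + x i * v)
      < ∑ i, ((1 - x i) * f u + x i * f v) :=
        Finset.sum_lt_sum (fun i _ => hf.convexOn.apply_combo_le hu hv (hx0 i) (hx1 i))
          ⟨j, Finset.mem_univ j, hf.apply_combo_lt hu hv huv hj0 hj1⟩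
    _ = ((Fintype.card ι : ℝ) - ∑ i, x i) * f u + (∑ i, x i) * f v := by
        simp only [Finset.sum_add_distrib, ← Finset.sum_mul, Finset.sum_sub_distrib,
          Finset.sum_const, Finset.card_univ, nsmul_eq_mul, mul_one]
    _ = f v + ((Fintype.card ι : ℝ) - 1) * f u := by rw [hsum]; ring

end ConvexCombination

theorem Antitone.apply_pos_of_sum_pos {ι : Type*} [Fintype ι] [Preorder ι] {x : ι → ℝ}
    (hx : Antitone x) (hsum : 0 < ∑ i, x i) {m : ι} (hm : ∀ i, m ≤ i) : 0 < x m := by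
  obtain ⟨i, -, hi⟩ : ∃ i ∈ Finset.univ, (0 : ℝ) < x i :=
    Finset.exists_lt_of_sum_lt (by simpa using hsum)
  exact hi.trans_le (hx (hm i))

/-- the strict `p`-th power sum inequality underlying the strict output
norm bound for generalized depolarizing channels. -/
theorem stmt_11 {d : ℕ} (hd : 2 ≤ d) (a p : ℝ) (ha0 : 0 < a) (ha1 : a < 1)
    (hp : 1 < p) (x : Fin d → ℝ) (hmono : Antitone x) (hpos : ∀ i, 0 ≤ x i)
    (hsum : ∑ i, x i = 1) (hx1 : x ⟨0, by omega⟩ < 1) :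
    ∑ i, (a * x i + (1 - a) / d) ^ p <
      (a + (1 - a) / d) ^ p + ((d : ℝ) - 1) * ((1 - a) / d) ^ p := by
  set c : ℝ := (1 - a) / d
  have hc : 0 ≤ c := div_nonneg (by linarith) (Nat.cast_nonneg d)
  have hfirst : ∀ i, (⟨0, by omega⟩ : Fin d) ≤ i := fun i => Fin.mk_le_of_le_val (Nat.zero_le _)
  have hle1 : ∀ i, x i ≤ 1 := fun i => (hmono (hfirst i)).trans hx1.le
  have key := (strictConvexOn_rpow hp).sum_apply_combo_lt (Set.mem_Ici.2 hc)
    (Set.mem_Ici.2 (by linarith : 0 ≤ a + c)) (by linarith : c < a + c).ne hpos hle1 hsum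
    (hmono.apply_pos_of_sum_pos (by linarith) hfirst) hx1
  simpa only [Fintype.card_fin, show ∀ t, (1 - t) * c + t * (a + c) = a * t + c by
    intro t; ring] using key
end
end

section
/- Let Φ be a generalized depolarizing channel on d×d complex matrices, Φ(ρ) = Σ_k a_k V_k ρ V_k† + (1−a)(Tr ρ)(1/d)I, in which all the unitary matrices V_k are diagonal in the standard basis {e_1, …, e_d}. Then Φ(|e_m⟩⟨e_m|) = a|e_m⟩⟨e_m| + (1−a)(1/d)I for each m, and C_Holv(Φ) = log d − S_min(Φ) = log d − S_min(Γ_a), where Γ_a is the depolarizing channel with the same parameter a. -/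
open scoped BigOperators Matrix Kronecker ComplexOrder

noncomputable section

/-!
For a state `ρ`, the output is `Φ ρ = ∑ₖ aₖ Vₖ ρ Vₖᴴ + c • 1` with `c = (1 - a) / d`, so its
spectrum lies above `c` and sums to `1`; hence it lies in `[c, c + a]`, and concavity of
`x ↦ -x log x` bounds its entropy below by that of `(c + a, c, …, c)`. Because diagonal unitaries
commute with `|eₘ⟩⟨eₘ|`, this bound is the entropy of `Φ |eₘ⟩⟨eₘ| = a |eₘ⟩⟨eₘ| + c • 1`, for `Φ`
and for `Γ_a` alike. The uniform ensemble of basis states has output entropy `S_min` for each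
member and average output `1 / d`, of maximal entropy `log d`, so it attains the Holevo capacity.
-/

section

open Real Finset

theorem ConcaveOn.add_card_sub_one_mul_le_sum {ι : Type*} [Fintype ι] {f : ℝ → ℝ} {a c : ℝ}
    (hf : ConcaveOn ℝ (Set.Icc c (c + a)) f) (ha : 0 < a) {ν : ι → ℝ} (hν : ∀ i, c ≤ ν i)
    (hsum : ∑ i, ν i = a + Fintype.card ι * c) :
    f (c + a) + (Fintype.card ι - 1) * f c ≤ ∑ i, f (ν i) := by
  classical
  have hν_le : ∀ i, ν i ≤ c + a := fun i => by
    have hrest : ∑ j ∈ univ.erase i, c ≤ ∑ j ∈ univ.erase i, ν j :=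
      sum_le_sum fun j _ => hν j
    rw [sum_const, card_erase_of_mem (mem_univ i), card_univ, nsmul_eq_mul,
      Nat.cast_pred (Fintype.card_pos_iff.2 ⟨i⟩)] at hrest
    linarith [sum_erase_add univ ν (mem_univ i)]
  -- `ν i = (1 - t i) • c + t i • (c + a)`, and the weights `t i` add up to `1`
  set t : ι → ℝ := fun i => (ν i - c) / a
  have hconcave : ∀ i, (1 - t i) * f c + t i * f (c + a) ≤ f (ν i) := fun i => by
    have ht0 : 0 ≤ t i := div_nonneg (sub_nonneg.2 (hν i)) ha.le
    have ht1 : t i ≤ 1 := (div_le_one ha).2 (by linarith [hν_le i])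
    have hmix : (1 - t i) • c + t i • (c + a) = ν i := by
      simp only [t, smul_eq_mul]; field_simp; ring
    have h := hf.2 (Set.left_mem_Icc.2 (by linarith)) (Set.right_mem_Icc.2 (by linarith))
      (sub_nonneg.2 ht1) ht0 (sub_add_cancel 1 (t i))
    rw [hmix] at h
    simpa only [smul_eq_mul] using h
  have ht_sum : ∑ i, t i = 1 := by
    simp only [t, ← sum_div, sum_sub_distrib, hsum, sum_const, card_univ, nsmul_eq_mul]
    field_simp; ring
  calc f (c + a) + (Fintype.card ι - 1) * f c
      = ∑ i, ((1 - t i) * f c + t i * f (c + a)) := by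
        simp only [sum_add_distrib, ← sum_mul, sum_sub_distrib, ht_sum, sum_const, card_univ,
          nsmul_eq_mul]
        ring
    _ ≤ ∑ i, f (ν i) := sum_le_sum fun i _ => hconcave i

theorem Real.sum_negMulLog_le_log_card {ι : Type*} [Fintype ι] {ν : ι → ℝ} (hν : ∀ i, 0 ≤ ν i)
    (hsum : ∑ i, ν i = 1) : ∑ i, negMulLog (ν i) ≤ log (Fintype.card ι) := by
  have hN : (0 : ℝ) < Fintype.card ι := by
    rw [← card_univ]
    exact_mod_cast card_pos.2 (nonempty_of_sum_ne_zero (hsum ▸ one_ne_zero))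
  have h := concaveOn_negMulLog.le_map_sum (t := univ) (w := fun _ => (Fintype.card ι : ℝ)⁻¹)
    (p := ν) (fun _ _ => by positivity) (by simp [hN.ne']) (fun i _ => hν i)
  simp only [smul_eq_mul, ← mul_sum, hsum, mul_one, negMulLog, log_inv, neg_mul_neg] at h
  exact (mul_le_mul_iff_right₀ (inv_pos.2 hN)).1 h

end

namespace Matrix

variable {n : Type*} [Fintype n] [DecidableEq n]

theorem IsHermitian.le_eigenvalues_of_posSemidef_sub_s14 {A : Matrix n n ℂ} (hA : A.IsHermitian)
    {c : ℝ} (h : (A - (c : ℂ) • 1).PosSemidef) (i : n) : c ≤ hA.eigenvalues i := by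
  open MatrixOrder in
  have hle : algebraMap ℝ (Matrix n n ℂ) c ≤ A := by
    rw [le_iff]; simpa [Algebra.algebraMap_eq_smul_one] using h
  rw [algebraMap_le_iff_le_spectrum (ha := hA.isSelfAdjoint)] at hle
  exact hle _ (hA.eigenvalues_mem_spectrum_real i)

theorem IsHermitian.sum_eigenvalues_eq_of_charpoly_eq {A : Matrix n n ℂ} (hA : A.IsHermitian)
    {p : n → ℝ} (hp : A.charpoly = ∏ i, (Polynomial.X - Polynomial.C (p i : ℂ))) (f : ℝ → ℝ) :
    ∑ i, f (hA.eigenvalues i) = ∑ i, f (p i) := by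
  have hroots := hA.roots_charpoly_eq_eigenvalues
  rw [hp, Polynomial.roots_prod _ _
    (Finset.prod_ne_zero_iff.2 fun i _ => Polynomial.X_sub_C_ne_zero _)] at hroots
  have hmap := congrArg (fun s => (Multiset.map (f ∘ Complex.re) s).sum) hroots
  simp only [Polynomial.roots_X_sub_C, Multiset.bind_singleton, Multiset.map_map] at hmap
  exact hmap.symm

theorem IsDiag.mul_single_mul_conjTranspose {V : Matrix n n ℂ} (hV : V.IsDiag)
    (hunit : V * Vᴴ = 1) (m : n) : V * single m m 1 * Vᴴ = single m m 1 := by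
  have hcomm : Commute V (single m m 1) := by
    rw [← hV.diagonal_diag, ← diagonal_single]
    exact commute_diagonal _ _
  rw [hcomm.eq, Matrix.mul_assoc, hunit, Matrix.mul_one]

end Matrix

namespace GenDep

open Matrix Real Finset

theorem IsDensityMatrix.sum_smul {n κ : Type*} [Fintype n] [Fintype κ] {w : κ → ℝ}
    {ρ : κ → Matrix n n ℂ} (hw : ∀ j, 0 ≤ w j) (hw1 : ∑ j, w j = 1)
    (hρ : ∀ j, IsDensityMatrix (ρ j)) :
    IsDensityMatrix (∑ j, (w j : ℂ) • ρ j) := by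
  refine ⟨posSemidef_sum _ fun j _ => (hρ j).1.smul (by exact_mod_cast hw j), ?_⟩
  simp [trace_sum, (hρ · |>.2), ← Complex.ofReal_sum, hw1]

section

variable {n : Type*} [Fintype n] [DecidableEq n]

theorem isDensityMatrix_single (m : n) : IsDensityMatrix (single m m (1 : ℂ)) := by
  refine ⟨?_, by simp⟩
  rw [← diagonal_single]
  exact PosSemidef.diagonal (Pi.single_nonneg.2 zero_le_one)

theorem vNEntropy_eq_sum_negMulLog_s14 {M : Matrix n n ℂ} (hM : M.IsHermitian) :
    vNEntropy M = ∑ i, negMulLog (hM.eigenvalues i) := by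
  simp [vNEntropy, hM, negMulLog]

theorem vNEntropy_diagonal (p : n → ℝ) :
    vNEntropy (diagonal fun i => (p i : ℂ)) = ∑ i, negMulLog (p i) := by
  have hherm : (diagonal fun i => (p i : ℂ)).IsHermitian :=
    isHermitian_diagonal_iff.2 fun i => by simp [IsSelfAdjoint]
  rw [vNEntropy_eq_sum_negMulLog_s14 hherm]
  exact hherm.sum_eigenvalues_eq_of_charpoly_eq (charpoly_diagonal _) _

theorem sum_eigenvalues_eq_one {M : Matrix n n ℂ} (hM : M.IsHermitian) (htr : M.trace = 1) :
    ∑ i, hM.eigenvalues i = 1 := by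
  have h := hM.trace_eq_sum_eigenvalues
  rw [htr, ← RCLike.ofReal_sum] at h
  exact RCLike.ofReal_injective (h.symm.trans RCLike.ofReal_one.symm)

theorem vNEntropy_le_log_card {M : Matrix n n ℂ} (hM : M.PosSemidef) (htr : M.trace = 1) :
    vNEntropy M ≤ log (Fintype.card n) := by
  rw [vNEntropy_eq_sum_negMulLog_s14 hM.1]
  exact sum_negMulLog_le_log_card hM.eigenvalues_nonneg (sum_eigenvalues_eq_one hM.1 htr)

theorem negMulLog_add_mul_le_vNEntropy {M : Matrix n n ℂ} {a c : ℝ} (ha : 0 < a) (hc : 0 ≤ c)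
    (hac : a + Fintype.card n * c = 1) (hM : (M - (c : ℂ) • 1).PosSemidef) (htr : M.trace = 1) :
    negMulLog (c + a) + (Fintype.card n - 1) * negMulLog c ≤ vNEntropy M := by
  have hherm : M.IsHermitian := by
    simpa using (hM.add (PosSemidef.one.smul (α := ℝ) hc)).1
  rw [vNEntropy_eq_sum_negMulLog_s14 hherm]
  refine (concaveOn_negMulLog.subset (Set.Icc_subset_Ici_self.trans (Set.Ici_subset_Ici.2 hc))
    (convex_Icc _ _)).add_card_sub_one_mul_le_sum ha (hherm.le_eigenvalues_of_posSemidef_sub_s14 hM) ?_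
  rw [sum_eigenvalues_eq_one hherm htr, hac]

theorem vNEntropy_smul_single_add_smul_one (a c : ℝ) (m : n) :
    vNEntropy ((a : ℂ) • single m m 1 + (c : ℂ) • 1) =
      negMulLog (c + a) + (Fintype.card n - 1) * negMulLog c := by
  have hdiag : (a : ℂ) • single m m 1 + (c : ℂ) • 1 =
      diagonal fun i => (((Pi.single m a : n → ℝ) i + c : ℝ) : ℂ) := by
    rw [← diagonal_single, smul_one_eq_diagonal, ← diagonal_smul, diagonal_add]
    congr 1
    ext i
    by_cases him : i = m <;> simp [him]
  rw [hdiag, vNEntropy_diagonal, Fintype.sum_eq_add_sum_compl m]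
  have hcompl : ∀ i ∈ ({m}ᶜ : Finset n), negMulLog ((Pi.single m a : n → ℝ) i + c) = negMulLog c :=
    fun i hi => by rw [Pi.single_eq_of_ne (by simpa using hi), zero_add]
  rw [sum_congr rfl hcompl, sum_const, card_compl, card_singleton, nsmul_eq_mul,
    Nat.cast_pred (Fintype.card_pos_iff.2 ⟨m⟩), Pi.single_eq_same, add_comm a]

theorem vNEntropy_inv_card_smul_one :
    vNEntropy ((((Fintype.card n : ℝ)⁻¹ : ℝ) : ℂ) • (1 : Matrix n n ℂ)) =
      log (Fintype.card n) := by
  rw [smul_one_eq_diagonal, vNEntropy_diagonal, sum_const, card_univ, nsmul_eq_mul, negMulLog,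
    log_inv]
  rcases eq_or_ne (Fintype.card n : ℝ) 0 with h | h
  · simp [h]
  · field_simp

theorem minOutputEntropy_eq_of_forall_le {Φ : Matrix n n ℂ → Matrix n n ℂ} {ρ₀ : Matrix n n ℂ}
    (hρ₀ : IsDensityMatrix ρ₀) (hle : ∀ ρ, IsDensityMatrix ρ → vNEntropy (Φ ρ₀) ≤ vNEntropy (Φ ρ)) :
    minOutputEntropy Φ = vNEntropy (Φ ρ₀) :=
  IsLeast.csInf_eq ⟨⟨ρ₀, hρ₀, rfl⟩, by rintro _ ⟨ρ, hρ, rfl⟩; exact hle ρ hρ⟩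

theorem holevoCapacity_eq_sub {d : ℕ} {Φ : Matrix (Fin d) (Fin d) ℂ → Matrix (Fin d) (Fin d) ℂ}
    {L U : ℝ} (hL : ∀ ρ, IsDensityMatrix ρ → L ≤ vNEntropy (Φ ρ))
    (hU : ∀ ρ, IsDensityMatrix ρ → vNEntropy (Φ ρ) ≤ U) {m : ℕ} {w : Fin m → ℝ}
    {ρ : Fin m → Matrix (Fin d) (Fin d) ℂ} (hw : ∀ j, 0 < w j) (hw1 : ∑ j, w j = 1)
    (hρ : ∀ j, IsDensityMatrix (ρ j)) (hL_eq : ∀ j, vNEntropy (Φ (ρ j)) = L)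
    (hU_eq : vNEntropy (Φ (∑ j, (w j : ℂ) • ρ j)) = U) :
    holevoCapacity Φ = U - L := by
  refine IsGreatest.csSup_eq ⟨⟨m, w, ρ, hw, hw1, hρ, ?_⟩, ?_⟩
  · simp only [hU_eq, hL_eq, ← sum_mul, hw1, one_mul]
  · rintro _ ⟨m, w, ρ, hw, hw1, hρ, rfl⟩
    have havg := hU _ (IsDensityMatrix.sum_smul (fun j => (hw j).le) hw1 hρ)
    have hterms : ∑ j, w j * L ≤ ∑ j, w j * vNEntropy (Φ (ρ j)) :=
      sum_le_sum fun j _ => mul_le_mul_of_nonneg_left (hL _ (hρ j)) (hw j).le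
    rw [← sum_mul, hw1, one_mul] at hterms
    linarith

end

def IsGeneralizedDepolarizing {d : ℕ} {ι : Type*} [Fintype ι] (a : ι → ℝ)
    (V : ι → Matrix (Fin d) (Fin d) ℂ) (atot : ℝ)
    (Φ : Matrix (Fin d) (Fin d) ℂ → Matrix (Fin d) (Fin d) ℂ) : Prop :=
  ∀ ρ, Φ ρ = (∑ k, (a k : ℂ) • (V k * ρ * (V k)ᴴ)) +
    ((((1 : ℝ) - atot : ℝ) : ℂ) / d * ρ.trace) • 1

theorem isGeneralizedDepolarizing_depolarizing (d : ℕ) (atot : ℝ) :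
    IsGeneralizedDepolarizing (fun _ : Unit => atot) (fun _ => 1) atot (depolarizing d atot) := by
  intro ρ
  simp [depolarizing]

namespace IsGeneralizedDepolarizing

variable {d : ℕ} {ι : Type*} [Fintype ι] {a : ι → ℝ} {V : ι → Matrix (Fin d) (Fin d) ℂ}
  {atot : ℝ} {Φ : Matrix (Fin d) (Fin d) ℂ → Matrix (Fin d) (Fin d) ℂ}

theorem apply_single (hΦ : IsGeneralizedDepolarizing a V atot Φ) (hatot : atot = ∑ k, a k)
    (hV : ∀ k, V k * (V k)ᴴ = 1) (hdiag : ∀ k, (V k).IsDiag) (m : Fin d) :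
    Φ (single m m 1) = (atot : ℂ) • single m m 1 + ((((1 : ℝ) - atot : ℝ) : ℂ) / d) • 1 := by
  rw [hΦ, (isDensityMatrix_single m).2, mul_one]
  simp only [(hdiag _).mul_single_mul_conjTranspose (hV _), ← sum_smul, hatot]
  push_cast
  rfl

theorem apply_smul_one (hΦ : IsGeneralizedDepolarizing a V atot Φ) (hatot : atot = ∑ k, a k)
    (hV : ∀ k, V k * (V k)ᴴ = 1) (hd : d ≠ 0) (s : ℂ) : Φ (s • 1) = s • 1 := by
  rw [hΦ]
  simp only [Matrix.mul_smul, Matrix.mul_one, Matrix.smul_mul, hV, trace_smul, trace_one,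
    Fintype.card_fin, smul_smul, ← sum_smul, ← add_smul, ← sum_mul]
  congr 1
  push_cast [hatot]
  field_simp
  ring

theorem trace_apply (hΦ : IsGeneralizedDepolarizing a V atot Φ) (hatot : atot = ∑ k, a k)
    (hV : ∀ k, (V k)ᴴ * V k = 1) (hd : d ≠ 0) (ρ : Matrix (Fin d) (Fin d) ℂ) :
    (Φ ρ).trace = ρ.trace := by
  rw [hΦ ρ]
  simp only [trace_add, trace_sum, trace_smul, trace_mul_cycle (V _), hV, Matrix.one_mul,
    trace_one, Fintype.card_fin, smul_eq_mul, ← sum_mul]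
  push_cast [hatot]
  field_simp
  ring

theorem posSemidef_apply_sub (hΦ : IsGeneralizedDepolarizing a V atot Φ) (ha : ∀ k, 0 ≤ a k)
    {ρ : Matrix (Fin d) (Fin d) ℂ} (hρ : IsDensityMatrix ρ) :
    (Φ ρ - ((((1 : ℝ) - atot) / d : ℝ) : ℂ) • 1).PosSemidef := by
  have hsub : Φ ρ - ((((1 : ℝ) - atot) / d : ℝ) : ℂ) • 1 =
      ∑ k, (a k : ℂ) • (V k * ρ * (V k)ᴴ) := by
    rw [hΦ, hρ.2]; push_cast; simp
  rw [hsub]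
  exact posSemidef_sum _ fun k _ => (hρ.1.mul_mul_conjTranspose_same (V k)).smul
    (by exact_mod_cast ha k)

theorem vNEntropy_apply_single (hΦ : IsGeneralizedDepolarizing a V atot Φ)
    (hatot : atot = ∑ k, a k) (hV : ∀ k, V k * (V k)ᴴ = 1) (hdiag : ∀ k, (V k).IsDiag) (m : Fin d) :
    vNEntropy (Φ (single m m 1)) =
      negMulLog ((1 - atot) / d + atot) + (d - 1) * negMulLog ((1 - atot) / d) := by
  rw [hΦ.apply_single hatot hV hdiag, ← Complex.ofReal_natCast, ← Complex.ofReal_div,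
    vNEntropy_smul_single_add_smul_one, Fintype.card_fin]

theorem vNEntropy_apply_single_le (hΦ : IsGeneralizedDepolarizing a V atot Φ) (ha : ∀ k, 0 ≤ a k)
    (hatot : atot = ∑ k, a k) (hV : ∀ k, IsUnitary (V k)) (hdiag : ∀ k, (V k).IsDiag)
    (hatot0 : 0 < atot) (hatot1 : atot ≤ 1) (hd : d ≠ 0) (m : Fin d)
    {ρ : Matrix (Fin d) (Fin d) ℂ} (hρ : IsDensityMatrix ρ) :
    vNEntropy (Φ (single m m 1)) ≤ vNEntropy (Φ ρ) := by
  have hc : atot + Fintype.card (Fin d) * ((1 - atot) / d) = 1 := by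
    rw [Fintype.card_fin]
    field_simp
    ring
  have h := negMulLog_add_mul_le_vNEntropy hatot0 (div_nonneg (by linarith) (Nat.cast_nonneg _))
    hc (hΦ.posSemidef_apply_sub ha hρ) ((hΦ.trace_apply hatot (hV · |>.1) hd ρ).trans hρ.2)
  rwa [Fintype.card_fin, ← hΦ.vNEntropy_apply_single hatot (hV · |>.2) hdiag m] at h

theorem vNEntropy_apply_le_log (hΦ : IsGeneralizedDepolarizing a V atot Φ) (ha : ∀ k, 0 ≤ a k)
    (hatot : atot = ∑ k, a k) (hV : ∀ k, (V k)ᴴ * V k = 1) (hatot1 : atot ≤ 1) (hd : d ≠ 0)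
    {ρ : Matrix (Fin d) (Fin d) ℂ} (hρ : IsDensityMatrix ρ) :
    vNEntropy (Φ ρ) ≤ log d := by
  have hc : (0 : ℝ) ≤ (1 - atot) / d := div_nonneg (by linarith) (Nat.cast_nonneg _)
  have hpsd : (Φ ρ).PosSemidef := by
    simpa using
      (hΦ.posSemidef_apply_sub ha hρ).add (PosSemidef.one.smul (Complex.zero_le_real.2 hc))
  simpa using vNEntropy_le_log_card hpsd ((hΦ.trace_apply hatot hV hd ρ).trans hρ.2)

theorem minOutputEntropy_eq (hΦ : IsGeneralizedDepolarizing a V atot Φ) (ha : ∀ k, 0 ≤ a k)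
    (hatot : atot = ∑ k, a k) (hV : ∀ k, IsUnitary (V k)) (hdiag : ∀ k, (V k).IsDiag)
    (hatot0 : 0 < atot) (hatot1 : atot ≤ 1) (hd : d ≠ 0) (m : Fin d) :
    minOutputEntropy Φ = vNEntropy (Φ (single m m 1)) :=
  minOutputEntropy_eq_of_forall_le (isDensityMatrix_single m) fun _ hρ =>
    hΦ.vNEntropy_apply_single_le ha hatot hV hdiag hatot0 hatot1 hd m hρ

theorem holevoCapacity_eq (hΦ : IsGeneralizedDepolarizing a V atot Φ) (ha : ∀ k, 0 ≤ a k)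
    (hatot : atot = ∑ k, a k) (hV : ∀ k, IsUnitary (V k)) (hdiag : ∀ k, (V k).IsDiag)
    (hatot0 : 0 < atot) (hatot1 : atot ≤ 1) (hd : d ≠ 0) (m : Fin d) :
    holevoCapacity Φ = log d - vNEntropy (Φ (single m m 1)) := by
  have havg : vNEntropy (Φ (∑ j, (((d : ℝ)⁻¹ : ℝ) : ℂ) • single j j 1)) = log d := by
    rw [← smul_sum, sum_single_eq_diagonal (fun _ => (1 : ℂ)), diagonal_one,
      hΦ.apply_smul_one hatot (hV · |>.2) hd]
    simpa using vNEntropy_inv_card_smul_one (n := Fin d)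
  refine holevoCapacity_eq_sub
    (fun _ hρ => hΦ.vNEntropy_apply_single_le ha hatot hV hdiag hatot0 hatot1 hd m hρ)
    (fun _ hρ => hΦ.vNEntropy_apply_le_log ha hatot (hV · |>.1) hatot1 hd hρ)
    (fun _ => inv_pos.2 (Nat.cast_pos.2 (Nat.pos_of_ne_zero hd))) ?_ isDensityMatrix_single
    (fun j => ?_) havg
  · simp [hd]
  · simp only [hΦ.vNEntropy_apply_single hatot (hV · |>.2) hdiag]

end IsGeneralizedDepolarizing

end GenDep

open GenDep in
/-- for a generalized depolarizing channel with simultaneously diagonal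
unitaries, the standard basis projections are mapped as for the depolarizing channel,
and the Holevo capacity equals `log d - S_min(Φ) = log d - S_min(Γ_a)`. -/
theorem stmt_14 {d : ℕ} (hd : 0 < d) {ι : Type*} [Fintype ι]
    (a : ι → ℝ) (V : ι → Matrix (Fin d) (Fin d) ℂ) (atot : ℝ)
    (ha : ∀ k, 0 < a k) (hatot : atot = ∑ k, a k)
    (hatot0 : 0 < atot) (hatot1 : atot < 1)
    (hV : ∀ k, IsUnitary (V k))
    (hdiag : ∀ k, ∀ i j : Fin d, i ≠ j → V k i j = 0)
    (Φ : Matrix (Fin d) (Fin d) ℂ → Matrix (Fin d) (Fin d) ℂ)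
    (hΦ : ∀ ρ, Φ ρ =
      (∑ k, (a k : ℂ) • (V k * ρ * (V k)ᴴ)) +
        ((((1 : ℝ) - atot : ℝ) : ℂ) / d * ρ.trace) • 1) :
    (∀ m : Fin d, Φ (Matrix.single m m 1) =
      (atot : ℂ) • Matrix.single m m 1 +
        ((((1 : ℝ) - atot : ℝ) : ℂ) / d) • 1) ∧
    holevoCapacity Φ = Real.log d - minOutputEntropy Φ ∧
    minOutputEntropy Φ = minOutputEntropy (depolarizing d atot) := by
  have hΦ' : IsGeneralizedDepolarizing a V atot Φ := hΦ
  have hΓ := isGeneralizedDepolarizing_depolarizing d atot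
  have ha' : ∀ k, 0 ≤ a k := fun k => (ha k).le
  have hdiag' : ∀ k, (V k).IsDiag := fun k i j hij => hdiag k i j hij
  have hunit : ∀ _ : Unit, IsUnitary (1 : Matrix (Fin d) (Fin d) ℂ) := fun _ => ⟨by simp, by simp⟩
  have hdiag_one : ∀ _ : Unit, (1 : Matrix (Fin d) (Fin d) ℂ).IsDiag := fun _ => Matrix.isDiag_one
  let e : Fin d := ⟨0, hd⟩
  have hminΦ := hΦ'.minOutputEntropy_eq ha' hatot hV hdiag' hatot0 hatot1.le hd.ne' e
  have hminΓ := hΓ.minOutputEntropy_eq (fun _ => hatot0.le) (by simp) hunit hdiag_one hatot0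
    hatot1.le hd.ne' e
  refine ⟨hΦ'.apply_single hatot (hV · |>.2) hdiag', ?_, ?_⟩
  · rw [hΦ'.holevoCapacity_eq ha' hatot hV hdiag' hatot0 hatot1.le hd.ne' e, hminΦ]
  · rw [hminΦ, hminΓ, hΦ'.vNEntropy_apply_single hatot (hV · |>.2) hdiag',
      hΓ.vNEntropy_apply_single (by simp) (fun _ => by simp) hdiag_one]
end
end

section
/- Let d ≥ 2 and let a be a real number with −1/(d²−1) ≤ a ≤ 1/(d+1). Then the depolarizing channel Γ_a on d×d matrices is entanglement breaking: for every density matrix ρ on ℂ^d ⊗ ℂ^d, the matrix (id ⊗ Γ_a)(ρ) is separable, i.e., it is a finite convex combination Σ_i p_i σ_i ⊗ τ_i of tensor products of density matrices σ_i, τ_i on ℂ^d. -/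
/-!
`Γ_a = Γ_{a(d+1)} ∘ Γ_{1/(d+1)}`, and `Γ_{1/(d+1)}(σ) = (σ + Tr σ • 1) / (d + 1)` is a
measure-and-prepare map: averaging `⟨v|σ|v⟩ |v⟩⟨v|` over the phase vectors `v = (i ^ θ_j)_j`,
`θ : Fin d → Fin 4`, gives `σ + Tr σ • 1` minus the diagonal of `σ`, which the standard basis
vectors restore. Hence `Γ_a(σ) = ∑ₘ cₘ ⟨vₘ|σ|vₘ⟩ τₘ` with `cₘ ≥ 0` and `τₘ = Γ_{a(d+1)}(Pₘ)`,
`Pₘ` the projection onto `vₘ`; these `τₘ` are density matrices when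
`-1/(d²-1) ≤ a ≤ 1/(d+1)`. For such a map `(id ⊗ Γ_a)(ρ) = ∑ₘ Aₘ ⊗ τₘ` with
`Aₘ = cₘ (1 ⊗ vₘ)ᴴ ρ (1 ⊗ vₘ)` positive semidefinite, which is separable once the `Aₘ` are
normalized.
-/

open scoped BigOperators Matrix Kronecker ComplexOrder

noncomputable section

open Matrix

namespace GenDep

section Separable

variable {ι κ : Type*} [Fintype ι] [Fintype κ]

lemma _root_.Matrix.PosSemidef.ofReal_trace_re {A : Matrix ι ι ℂ} (hA : A.PosSemidef) :
    ((A.trace.re : ℝ) : ℂ) = A.trace :=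
  (Complex.eq_re_of_ofReal_le (by rw [Complex.ofReal_zero]; exact hA.trace_nonneg)).symm

lemma isDensityMatrix_inv_trace_smul {A : Matrix ι ι ℂ} (hA : A.PosSemidef)
    (h : A.trace.re ≠ 0) : IsDensityMatrix (A.trace.re⁻¹ • A) := by
  refine ⟨hA.smul (inv_nonneg.mpr (Complex.nonneg_iff.mp hA.trace_nonneg).1), ?_⟩
  obtain ⟨r, hr⟩ : ∃ r : ℝ, A.trace = r := ⟨_, hA.ofReal_trace_re.symm⟩
  rw [hr, Complex.ofReal_re] at h ⊢
  rw [trace_smul, hr, Complex.real_smul, ← Complex.ofReal_mul, inv_mul_cancel₀ h,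
    Complex.ofReal_one]

def IsSeparable (X : Matrix (ι × κ) (ι × κ) ℂ) : Prop :=
  ∃ (m : ℕ) (p : Fin m → ℝ) (σ : Fin m → Matrix ι ι ℂ) (τ : Fin m → Matrix κ κ ℂ),
    (∀ i, 0 ≤ p i) ∧ (∑ i, p i = 1) ∧ (∀ i, IsDensityMatrix (σ i)) ∧
      (∀ i, IsDensityMatrix (τ i)) ∧ X = ∑ i, (p i : ℂ) • (σ i ⊗ₖ τ i)

theorem isSeparable_sum_kronecker {M : Type*} [Fintype M] {A : M → Matrix ι ι ℂ}
    {τ : M → Matrix κ κ ℂ} (hA : ∀ m, (A m).PosSemidef) (htr : ∑ m, (A m).trace = 1)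
    (hτ : ∀ m, IsDensityMatrix (τ m)) : IsSeparable (∑ m, A m ⊗ₖ τ m) := by
  set p : M → ℝ := fun m => (A m).trace.re
  have hp_sum : ∑ m, p m = 1 := by simpa [p, Complex.re_sum] using congrArg Complex.re htr
  obtain ⟨m₀, hm₀⟩ : ∃ m, p m ≠ 0 := by
    by_contra! h
    simp [h] at hp_sum
  classical
  -- `A m = 0` when `p m = 0`, so any density matrix serves as `σ m` there.
  let σ : M → Matrix ι ι ℂ := fun m => if p m = 0 then (p m₀)⁻¹ • A m₀ else (p m)⁻¹ • A m
  have hσ : ∀ m, IsDensityMatrix (σ m) := fun m => by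
    by_cases hm : p m = 0
    · simpa [σ, hm] using isDensityMatrix_inv_trace_smul (hA m₀) hm₀
    · simpa [σ, hm] using isDensityMatrix_inv_trace_smul (hA m) hm
  have hterm : ∀ m, (p m : ℂ) • (σ m ⊗ₖ τ m) = A m ⊗ₖ τ m := fun m => by
    by_cases hm : p m = 0
    · have hA0 : A m = 0 :=
        (hA m).trace_eq_zero_iff.mp (by rw [← (hA m).ofReal_trace_re]; exact_mod_cast hm)
      simp [hm, hA0]
    · simp only [σ, if_neg hm, smul_kronecker]
      rw [Complex.coe_smul, smul_smul, mul_inv_cancel₀ hm, one_smul]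
  let e := (Fintype.equivFin M).symm
  refine ⟨Fintype.card M, p ∘ e, σ ∘ e, τ ∘ e,
    fun i => (Complex.nonneg_iff.mp (hA (e i)).trace_nonneg).1,
    by simpa [e.sum_comp] using hp_sum, fun i => hσ (e i), fun i => hτ (e i), ?_⟩
  simp only [Function.comp_apply, hterm]
  exact (e.sum_comp fun m => A m ⊗ₖ τ m).symm

end Separable

section MeasurePrepare

variable {ι κ M : Type*} [Fintype ι] [Fintype κ] [Fintype M]

def block (ρ : Matrix (ι × κ) (ι × κ) ℂ) (i k : ι) : Matrix κ κ ℂ :=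
  of fun j l => ρ (i, j) (k, l)

/-- The matrix of `x ↦ x ⊗ v`. -/
def kroneckerVec (ι : Type*) [DecidableEq ι] (v : κ → ℂ) : Matrix (ι × κ) ι ℂ :=
  of fun p i => if p.1 = i then v p.2 else 0

lemma conjTranspose_kroneckerVec_mul_mul_apply [DecidableEq ι] (v : κ → ℂ)
    (ρ : Matrix (ι × κ) (ι × κ) ℂ) (i k : ι) :
    ((kroneckerVec ι v)ᴴ * ρ * kroneckerVec ι v) i k = star v ⬝ᵥ block ρ i k *ᵥ v := by
  simp only [kroneckerVec, block, mul_apply, conjTranspose_apply, of_apply, dotProduct, mulVec,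
    Pi.star_apply, apply_ite star, star_zero, ite_mul, mul_ite, zero_mul, mul_zero,
    Fintype.sum_prod_type, Finset.sum_ite_irrel, Finset.sum_const_zero, Finset.sum_ite_eq',
    Finset.mem_univ, if_true, Finset.sum_mul, Finset.mul_sum, mul_assoc]
  rw [Finset.sum_comm]

lemma trace_block_sum (ρ : Matrix (ι × κ) (ι × κ) ℂ) : ∑ i, (block ρ i i).trace = ρ.trace := by
  simp [block, trace, Fintype.sum_prod_type]

variable {Φ : Matrix κ κ ℂ → Matrix κ κ ℂ} {c : M → ℝ} {v : M → κ → ℂ} {τ : M → Matrix κ κ ℂ}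

lemma tensorMap_id_eq_sum_kronecker [DecidableEq ι]
    (hΦ : ∀ σ, Φ σ = ∑ m, ((c m : ℂ) * (star (v m) ⬝ᵥ σ *ᵥ v m)) • τ m)
    (ρ : Matrix (ι × κ) (ι × κ) ℂ) :
    tensorMap id Φ ρ =
      ∑ m, ((c m : ℂ) • ((kroneckerVec ι (v m))ᴴ * ρ * kroneckerVec ι (v m))) ⊗ₖ τ m := by
  ext ⟨i, j⟩ ⟨k, l⟩
  simp [tensorMap, hΦ, kroneckerMap_apply, Matrix.sum_apply, single_apply,
    conjTranspose_kroneckerVec_mul_mul_apply, block, ite_and, mul_assoc]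

lemma sum_mul_star_dotProduct_mulVec_eq_trace
    (hΦ : ∀ σ, Φ σ = ∑ m, ((c m : ℂ) * (star (v m) ⬝ᵥ σ *ᵥ v m)) • τ m)
    (htp : ∀ σ, (Φ σ).trace = σ.trace) (hτ : ∀ m, (τ m).trace = 1) (σ : Matrix κ κ ℂ) :
    ∑ m, (c m : ℂ) * (star (v m) ⬝ᵥ σ *ᵥ v m) = σ.trace := by
  simpa [hτ, trace_sum] using (congrArg trace (hΦ σ)).symm.trans (htp σ)

theorem isSeparable_tensorMap_id [DecidableEq ι] (hc : ∀ m, 0 ≤ c m)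
    (hτ : ∀ m, IsDensityMatrix (τ m)) (htp : ∀ σ, (Φ σ).trace = σ.trace)
    (hΦ : ∀ σ, Φ σ = ∑ m, ((c m : ℂ) * (star (v m) ⬝ᵥ σ *ᵥ v m)) • τ m)
    {ρ : Matrix (ι × κ) (ι × κ) ℂ} (hρ : IsDensityMatrix ρ) : IsSeparable (tensorMap id Φ ρ) := by
  rw [tensorMap_id_eq_sum_kronecker hΦ]
  refine isSeparable_sum_kronecker (fun m => (hρ.1.conjTranspose_mul_mul_same _).smul ?_) ?_ hτ
  · exact_mod_cast hc m
  · have hpovm := sum_mul_star_dotProduct_mulVec_eq_trace hΦ htp (fun m => (hτ m).2)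
    simp_rw [trace_smul, trace, diag_apply, conjTranspose_kroneckerVec_mul_mul_apply, smul_eq_mul,
      Finset.mul_sum]
    rw [Finset.sum_comm]
    simp_rw [hpovm, trace_block_sum, hρ.2]

end MeasurePrepare

section RankOneProj

variable {κ : Type*} [Fintype κ]

def rankOneProj (v : κ → ℂ) : Matrix κ κ ℂ :=
  (star v ⬝ᵥ v)⁻¹ • vecMulVec v (star v)

lemma posSemidef_rankOneProj (v : κ → ℂ) : (rankOneProj v).PosSemidef :=
  (posSemidef_vecMulVec_self_star v).smul (inv_nonneg.mpr (dotProduct_star_self_nonneg v))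

variable {v : κ → ℂ}

lemma trace_rankOneProj (hv : star v ⬝ᵥ v ≠ 0) : (rankOneProj v).trace = 1 := by
  rw [rankOneProj, trace_smul, trace_vecMulVec, dotProduct_comm v, smul_eq_mul,
    inv_mul_cancel₀ hv]

lemma rankOneProj_mul_self (hv : star v ⬝ᵥ v ≠ 0) :
    rankOneProj v * rankOneProj v = rankOneProj v := by
  rw [rankOneProj, smul_mul_smul_comm, vecMulVec_mul_vecMulVec, vecMulVec_smul, smul_smul,
    mul_assoc, inv_mul_cancel₀ hv, mul_one]

lemma posSemidef_one_sub_rankOneProj [DecidableEq κ] (hv : star v ⬝ᵥ v ≠ 0) :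
    (1 - rankOneProj v).PosSemidef := by
  have hP : (rankOneProj v)ᴴ = rankOneProj v := (posSemidef_rankOneProj v).1
  have : 1 - rankOneProj v = (1 - rankOneProj v)ᴴ * (1 - rankOneProj v) := by
    rw [conjTranspose_sub, conjTranspose_one, hP, sub_mul, mul_sub, mul_sub,
      rankOneProj_mul_self hv]
    simp
  rw [this]
  exact posSemidef_conjTranspose_mul_self _

end RankOneProj

section Depolarizing

variable {d : ℕ}

lemma trace_depolarizing (hd : d ≠ 0) (a : ℝ) (σ : Matrix (Fin d) (Fin d) ℂ) :
    (depolarizing d a σ).trace = σ.trace := by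
  rw [depolarizing, trace_add, trace_smul, trace_smul, trace_one, Fintype.card_fin, smul_eq_mul,
    smul_eq_mul]
  push_cast
  field_simp
  ring

lemma depolarizing_depolarizing (hd : d ≠ 0) (a b : ℝ) (σ : Matrix (Fin d) (Fin d) ℂ) :
    depolarizing d a (depolarizing d b σ) = depolarizing d (a * b) σ := by
  rw [depolarizing, trace_depolarizing hd]
  ext i j
  simp only [depolarizing, Matrix.add_apply, Matrix.smul_apply, smul_eq_mul]
  push_cast
  field_simp
  ring

lemma depolarizing_sum_smul {M : Type*} [Fintype M] (a : ℝ) (x : M → ℂ)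
    (P : M → Matrix (Fin d) (Fin d) ℂ) :
    depolarizing d a (∑ m, x m • P m) = ∑ m, x m • depolarizing d a (P m) := by
  simp only [depolarizing, trace_sum, trace_smul, smul_eq_mul, smul_add, Finset.sum_add_distrib,
    Finset.smul_sum, Finset.mul_sum, Finset.sum_smul, smul_smul]
  congr 1 <;> refine Finset.sum_congr rfl fun m _ => by ring_nf

lemma isDensityMatrix_depolarizing_rankOneProj (hd : d ≠ 0) {b : ℝ} (hb : b ≤ 1)
    (hb' : 0 ≤ 1 + b * (d - 1)) {v : Fin d → ℂ} (hv : star v ⬝ᵥ v ≠ 0) :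
    IsDensityMatrix (depolarizing d b (rankOneProj v)) := by
  refine ⟨?_, by rw [trace_depolarizing hd, trace_rankOneProj hv]⟩
  have : depolarizing d b (rankOneProj v) = (((1 + b * (d - 1)) / d : ℝ) : ℂ) • rankOneProj v
      + (((1 - b) / d : ℝ) : ℂ) • (1 - rankOneProj v) := by
    rw [depolarizing, trace_rankOneProj hv]
    ext i j
    simp only [Matrix.add_apply, Matrix.smul_apply, Matrix.sub_apply, smul_eq_mul]
    push_cast
    field_simp
    ring
  rw [this]
  have hd' : (0 : ℝ) < d := by positivity
  exact ((posSemidef_rankOneProj v).smul (by exact_mod_cast div_nonneg hb' hd'.le)).add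
    ((posSemidef_one_sub_rankOneProj hv).smul (by exact_mod_cast div_nonneg (by linarith) hd'.le))

end Depolarizing

section PhaseFrame

open Complex

lemma star_I_pow (k : ℕ) : star (I ^ k) = I ^ (3 * k) := by
  rw [star_pow, Complex.star_def, Complex.conj_I, pow_mul, I_pow_three]

lemma sum_fin_four_I_pow_mul (n : ℕ) :
    ∑ t : Fin 4, I ^ ((t : ℕ) * n) = if 4 ∣ n then 4 else 0 := by
  simp only [pow_mul', Fin.sum_univ_four, Nat.dvd_iff_mod_eq_zero]
  rw [I_pow_eq_pow_mod n]
  have : n % 4 < 4 := Nat.mod_lt _ (by norm_num)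
  interval_cases n % 4 <;> norm_num [pow_succ, I_sq]

variable {d : ℕ}

lemma forall_four_dvd_iff (a b c e : Fin d) :
    (∀ x, 4 ∣ 3 * (if a = x then 1 else 0) + (if b = x then 1 else 0)
        + (if c = x then 1 else 0) + 3 * (if e = x then 1 else 0)) ↔
      (a = b ∧ c = e) ∨ (a = c ∧ b = e) := by
  constructor
  · intro h
    have ha := h a; have hb := h b; have hc := h c
    simp only [Fin.ext_iff] at ha hb hc ⊢
    split_ifs at ha hb hc <;> omega
  · rintro (⟨rfl, rfl⟩ | ⟨rfl, rfl⟩) x <;> split_ifs <;> omega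

def phaseVec (θ : Fin d → Fin 4) : Fin d → ℂ := fun j => I ^ (θ j : ℕ)

lemma star_phaseVec_dotProduct (θ : Fin d → Fin 4) : star (phaseVec θ) ⬝ᵥ phaseVec θ = d := by
  simp [phaseVec, dotProduct, ← mul_pow]

lemma sum_phaseVec_moment (a b c e : Fin d) :
    ∑ θ : Fin d → Fin 4,
        star (phaseVec θ a) * phaseVec θ b * phaseVec θ c * star (phaseVec θ e) =
      if (a = b ∧ c = e) ∨ (a = c ∧ b = e) then 4 ^ d else 0 := by
  -- Since `conj (I ^ k) = I ^ (3 * k)`, the summand is `∏ x, I ^ (θ x * n x)`.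
  set n : Fin d → ℕ := fun x => 3 * (if a = x then 1 else 0) + (if b = x then 1 else 0)
    + (if c = x then 1 else 0) + 3 * (if e = x then 1 else 0)
  have hprod : ∀ θ : Fin d → Fin 4,
      star (phaseVec θ a) * phaseVec θ b * phaseVec θ c * star (phaseVec θ e) =
        ∏ x, I ^ ((θ x : ℕ) * n x) := fun θ => by
    rw [Finset.prod_pow_eq_pow_sum]
    simp only [phaseVec, star_I_pow, ← pow_add]
    congr 1
    simp only [n, mul_add, mul_ite, mul_one, mul_zero, Finset.sum_add_distrib, Finset.sum_ite_eq,
      Finset.mem_univ, if_true]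
    ring
  simp_rw [hprod, ← Fintype.prod_sum fun x (t : Fin 4) => I ^ ((t : ℕ) * n x),
    sum_fin_four_I_pow_mul]
  rw [Finset.prod_ite_zero]
  simp only [Finset.mem_univ, true_imp_iff, Finset.prod_const, Finset.card_univ,
    Fintype.card_fin, n, forall_four_dvd_iff]

lemma sum_sum_mul_ite_pairing (σ : Matrix (Fin d) (Fin d) ℂ) (c e : Fin d) (x : ℂ) :
    ∑ a, ∑ b, σ a b * (if (a = b ∧ c = e) ∨ (a = c ∧ b = e) then x else 0) =
      x * if c = e then σ.trace else σ c e := by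
  split_ifs with hce
  · subst hce
    have : ∀ a b : Fin d, a = b ∨ a = c ∧ b = c ↔ a = b := by grind
    simp [this, trace, Finset.mul_sum, mul_comm]
  · simp [hce, ite_and, mul_comm]

lemma sum_star_phaseVec_dotProduct_mulVec_mul (σ : Matrix (Fin d) (Fin d) ℂ) (c e : Fin d) :
    ∑ θ : Fin d → Fin 4,
        (star (phaseVec θ) ⬝ᵥ σ *ᵥ phaseVec θ) * (phaseVec θ c * star (phaseVec θ e)) =
      4 ^ d * if c = e then σ.trace else σ c e := by
  have hexpand : ∀ θ : Fin d → Fin 4,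
      (star (phaseVec θ) ⬝ᵥ σ *ᵥ phaseVec θ) * (phaseVec θ c * star (phaseVec θ e)) =
        ∑ a, ∑ b, σ a b *
          (star (phaseVec θ a) * phaseVec θ b * phaseVec θ c * star (phaseVec θ e)) := fun θ => by
    simp only [dotProduct, mulVec, Finset.sum_mul, Finset.mul_sum, Pi.star_apply]
    exact Finset.sum_congr rfl fun _ _ => Finset.sum_congr rfl fun _ _ => by ring
  simp_rw [hexpand]
  rw [Finset.sum_comm]
  simp_rw [Finset.sum_comm (s := (Finset.univ : Finset (Fin d → Fin 4))), ← Finset.mul_sum,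
    sum_phaseVec_moment, sum_sum_mul_ite_pairing]

end PhaseFrame

section Frame

variable {d : ℕ}

def frameVec : (Fin d → Fin 4) ⊕ Fin d → Fin d → ℂ :=
  Sum.elim phaseVec fun i => Pi.single i 1

def frameWeight : (Fin d → Fin 4) ⊕ Fin d → ℝ :=
  Sum.elim (fun _ => d / (4 ^ d * (d + 1))) fun _ => 1 / (d + 1)

lemma frameWeight_nonneg (m : (Fin d → Fin 4) ⊕ Fin d) : 0 ≤ frameWeight m := by
  cases m <;> simp only [frameWeight, Sum.elim_inl, Sum.elim_inr] <;> positivity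

lemma star_frameVec_dotProduct_ne_zero (hd : d ≠ 0) (m : (Fin d → Fin 4) ⊕ Fin d) :
    star (frameVec m) ⬝ᵥ frameVec m ≠ 0 := by
  cases m <;> simp [frameVec, star_phaseVec_dotProduct, hd]

lemma depolarizing_one_div_succ_eq_sum (hd : d ≠ 0) (σ : Matrix (Fin d) (Fin d) ℂ) :
    depolarizing d (1 / (d + 1)) σ =
      ∑ m, ((frameWeight m : ℂ) * (star (frameVec m) ⬝ᵥ σ *ᵥ frameVec m)) •
        rankOneProj (frameVec m) := by
  ext c e
  rw [Matrix.sum_apply, Fintype.sum_sum_type]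
  have hphase : ∑ θ : Fin d → Fin 4, (((frameWeight (.inl θ) : ℂ) *
      (star (frameVec (.inl θ)) ⬝ᵥ σ *ᵥ frameVec (.inl θ))) • rankOneProj (frameVec (.inl θ))) c e =
      ((d : ℂ) + 1)⁻¹ * if c = e then σ.trace else σ c e := by
    simp only [frameWeight, frameVec, Sum.elim_inl, rankOneProj, star_phaseVec_dotProduct,
      Matrix.smul_apply, vecMulVec_apply, smul_eq_mul, Pi.star_apply]
    have hw : ((d / (4 ^ d * (d + 1)) : ℝ) : ℂ) * (d : ℂ)⁻¹ =
        ((d : ℂ) + 1)⁻¹ * ((4 : ℂ) ^ d)⁻¹ := by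
      push_cast
      field_simp
    rw [← inv_mul_cancel_left₀ (pow_ne_zero d (four_ne_zero' ℂ)) (if c = e then _ else _),
      ← sum_star_phaseVec_dotProduct_mulVec_mul, ← mul_assoc, Finset.mul_sum]
    refine Finset.sum_congr rfl fun θ _ => ?_
    linear_combination
      (star (phaseVec θ) ⬝ᵥ σ *ᵥ phaseVec θ * (phaseVec θ c * star (phaseVec θ e))) * hw
  have hbasis : ∑ i : Fin d, (((frameWeight (.inr i) : ℂ) *
      (star (frameVec (.inr i)) ⬝ᵥ σ *ᵥ frameVec (.inr i))) • rankOneProj (frameVec (.inr i))) c e =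
      ((d : ℂ) + 1)⁻¹ * if c = e then σ c c else 0 := by
    split_ifs with hce
    · subst hce
      simp [frameWeight, frameVec, rankOneProj, vecMulVec_apply, Pi.single_apply]
    · simp [frameWeight, frameVec, rankOneProj, vecMulVec_apply, Pi.single_apply, hce]
  rw [hphase, hbasis]
  split_ifs with hce
  · subst hce
    simp only [depolarizing, Matrix.add_apply, Matrix.smul_apply, smul_eq_mul, one_apply_eq,
      mul_one]
    push_cast
    field_simp
    ring
  · simp [depolarizing, hce]

lemma depolarizing_eq_sum (hd : d ≠ 0) (a : ℝ) (σ : Matrix (Fin d) (Fin d) ℂ) :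
    depolarizing d a σ =
      ∑ m, ((frameWeight m : ℂ) * (star (frameVec m) ⬝ᵥ σ *ᵥ frameVec m)) •
        depolarizing d (a * (d + 1)) (rankOneProj (frameVec m)) := by
  rw [← depolarizing_sum_smul, ← depolarizing_one_div_succ_eq_sum hd, depolarizing_depolarizing hd]
  congr 1
  field_simp

end Frame

end GenDep

open GenDep in
theorem stmt_18_general {d : ℕ} (a : ℝ)
    (ha : -(1 / ((d : ℝ) ^ 2 - 1)) ≤ a) (ha1 : a ≤ 1 / ((d : ℝ) + 1)) :
    ∀ ρ : Matrix (Fin d × Fin d) (Fin d × Fin d) ℂ, IsDensityMatrix ρ →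
      ∃ (m : ℕ) (p : Fin m → ℝ) (σ τ : Fin m → Matrix (Fin d) (Fin d) ℂ),
        (∀ i, 0 ≤ p i) ∧ (∑ i, p i = 1) ∧
          (∀ i, IsDensityMatrix (σ i)) ∧ (∀ i, IsDensityMatrix (τ i)) ∧
          tensorMap (id : Matrix (Fin d) (Fin d) ℂ → Matrix (Fin d) (Fin d) ℂ)
              (depolarizing d a) ρ =
            ∑ i, (p i : ℂ) • (σ i ⊗ₖ τ i) := by
  intro ρ hρ
  have hd : d ≠ 0 := by
    rintro rfl
    simpa using hρ.2
  have hb : a * (d + 1) ≤ 1 := (le_div_iff₀ (by positivity)).mp ha1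
  have hb' : 0 ≤ 1 + a * (d + 1) * (d - 1) := by
    rcases (by omega : d = 1 ∨ 2 ≤ d) with rfl | hd2
    · norm_num
    · have hpos : (0 : ℝ) < (d : ℝ) ^ 2 - 1 := by
        have : (2 : ℝ) ≤ d := by exact_mod_cast hd2
        nlinarith
      have hmul := mul_le_mul_of_nonneg_right ha hpos.le
      rw [neg_mul, one_div, inv_mul_cancel₀ hpos.ne'] at hmul
      linear_combination hmul
  exact isSeparable_tensorMap_id frameWeight_nonneg
    (fun m => isDensityMatrix_depolarizing_rankOneProj hd hb hb'
      (star_frameVec_dotProduct_ne_zero hd m))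
    (trace_depolarizing hd a) (depolarizing_eq_sum hd a) hρ

open GenDep in
/-- for `-1/(d²-1) ≤ a ≤ 1/(d+1)` the depolarizing channel is
entanglement breaking: `(id ⊗ Γ_a)(ρ)` is separable for every density matrix `ρ` on
`ℂ^d ⊗ ℂ^d`. -/
theorem stmt_18 {d : ℕ} (hd : 2 ≤ d) (a : ℝ)
    (ha : -(1 / ((d : ℝ) ^ 2 - 1)) ≤ a) (ha1 : a ≤ 1 / ((d : ℝ) + 1)) :
    ∀ ρ : Matrix (Fin d × Fin d) (Fin d × Fin d) ℂ, IsDensityMatrix ρ →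
      ∃ (m : ℕ) (p : Fin m → ℝ) (σ τ : Fin m → Matrix (Fin d) (Fin d) ℂ),
        (∀ i, 0 ≤ p i) ∧ (∑ i, p i = 1) ∧
          (∀ i, IsDensityMatrix (σ i)) ∧ (∀ i, IsDensityMatrix (τ i)) ∧
          tensorMap (id : Matrix (Fin d) (Fin d) ℂ → Matrix (Fin d) (Fin d) ℂ)
              (depolarizing d a) ρ =
            ∑ i, (p i : ℂ) • (σ i ⊗ₖ τ i) :=
  stmt_18_general a ha ha1
end
end
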